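/- arXiv:math/0506358 — 9 statements merged into one kernel-verified Lean document; each statement's English description precedes it below -/
import Mathlib

section
/- For every set partition T = {t_1,…,t_k} of {1,…,n}, listing the blocks so that their minima increase (min(t_1) < min(t_2) < ⋯ < min(t_k)), there exists a permutation τ of {1,…,n} whose Patience Sorting pile configuration R(τ) is exactly the sequence of piles (t_1,…,t_k); moreover one may take τ = RPW(T), the concatenation of t_1,…,t_k with each block written in decreasing order. -/
/-!
Deal one block, written in decreasing order. Every existing top is the minimum of an earlier
block, hence below all cards of this block, so the first (largest) card opens a new pile on the
right, and each later card, smaller than that pile's top but larger than every other top, lands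
on it. The new pile is then exactly the block, with its minimum, below all later cards, on top.
-/

/-- One step of Patience Sorting: place card `c` on the leftmost pile whose top
(head) is larger than `c`, or start a new pile on the right.  Piles are stored
top-first, so each pile is an increasing list whose head is the top (smallest) card. -/
def PSinsert (c : ℕ) : List (List ℕ) → List (List ℕ)
  | [] => [[c]]
  | [] :: ps => [] :: PSinsert c ps
  | (x :: p) :: ps =>
      if c < x then (c :: x :: p) :: ps else (x :: p) :: PSinsert c ps

/-- The pile configuration `R(w)` produced by Patience Sorting applied to the word `w`. -/
def PSpiles (w : List ℕ) : List (List ℕ) :=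
  w.foldl (fun ps c => PSinsert c ps) []

/-- The one-line word (with values `1,…,n`) of a permutation of `Fin n`. -/
def permWord {n : ℕ} (σ : Equiv.Perm (Fin n)) : List ℕ :=
  List.ofFn fun i => (σ i : ℕ) + 1

def TopsLE (ps : List (List ℕ)) (c : ℕ) : Prop :=
  ∀ p ∈ ps, ∃ x l, p = x :: l ∧ x ≤ c

theorem TopsLE.mono {ps : List (List ℕ)} {a b : ℕ} (h : TopsLE ps a) (hab : a ≤ b) :
    TopsLE ps b := fun p hp =>
  let ⟨x, l, hp, hx⟩ := h p hp
  ⟨x, l, hp, hx.trans hab⟩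

theorem topsLE_append {ps qs : List (List ℕ)} {c : ℕ} :
    TopsLE (ps ++ qs) c ↔ TopsLE ps c ∧ TopsLE qs c :=
  List.forall_mem_append

theorem topsLE_cons {ps : List (List ℕ)} {x c : ℕ} {l : List ℕ} (hxc : x ≤ c)
    (h : TopsLE ps c) : TopsLE ((x :: l) :: ps) c := by
  intro p hp
  rcases List.mem_cons.1 hp with rfl | hp
  · exact ⟨x, l, rfl, hxc⟩
  · exact h p hp

theorem PSinsert_of_topsLE {c : ℕ} {ps : List (List ℕ)} (h : TopsLE ps c) :
    PSinsert c ps = ps ++ [[c]] := by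
  induction ps with
  | nil => rfl
  | cons p ps ih =>
    obtain ⟨x, l, rfl, hx⟩ := h _ List.mem_cons_self
    simp [PSinsert, Nat.not_lt.mpr hx, ih fun q hq => h q (List.mem_cons_of_mem _ hq)]

theorem PSinsert_append_singleton {c x : ℕ} {l : List ℕ} {ps : List (List ℕ)}
    (h : TopsLE ps c) (hc : c < x) :
    PSinsert c (ps ++ [x :: l]) = ps ++ [c :: x :: l] := by
  induction ps with
  | nil => simp [PSinsert, hc]
  | cons p ps ih =>
    obtain ⟨y, m, rfl, hy⟩ := h _ List.mem_cons_self
    simp [PSinsert, Nat.not_lt.mpr hy, ih fun q hq => h q (List.mem_cons_of_mem _ hq)]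

theorem foldl_PSinsert_reverse_of_pairwise_lt (x : ℕ) (l : List ℕ) {ps : List (List ℕ)}
    (hl : (x :: l).Pairwise (· < ·)) (hps : TopsLE ps x) :
    (x :: l).reverse.foldl (fun ps c => PSinsert c ps) ps = ps ++ [x :: l] := by
  induction l generalizing x with
  | nil => simpa using PSinsert_of_topsLE hps
  | cons y m ih =>
    have hxy : x < y := List.rel_of_pairwise_cons hl List.mem_cons_self
    rw [List.reverse_cons, List.foldl_append, ih y hl.of_cons (hps.mono hxy.le)]
    simpa using PSinsert_append_singleton hps hxy

theorem Finset.exists_sort_eq_min'_cons {α : Type*} [LinearOrder α] {s : Finset α} (hs : s.Nonempty) :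
    ∃ l, s.sort (· ≤ ·) = s.min' hs :: l := by
  obtain ⟨a, l, h⟩ := List.exists_cons_of_ne_nil <|
    List.ne_nil_of_length_pos (by simpa using hs.card_pos : 0 < (s.sort (· ≤ ·)).length)
  have hmin' := Finset.min'_eq_sorted_zero (h := hs)
  simp only [h, List.getElem_cons_zero] at hmin'
  exact ⟨l, hmin' ▸ h⟩

theorem foldl_PSinsert_sort_reverse {t : Finset ℕ} (ht : t.Nonempty) {ps : List (List ℕ)}
    (hps : TopsLE ps (t.min' ht)) :
    (t.sort (· ≤ ·)).reverse.foldl (fun ps c => PSinsert c ps) ps = ps ++ [t.sort (· ≤ ·)] := by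
  obtain ⟨l, hl⟩ := Finset.exists_sort_eq_min'_cons ht
  rw [hl]
  exact foldl_PSinsert_reverse_of_pairwise_lt _ l
    (hl ▸ (Finset.sortedLT_sort t).pairwise) hps

theorem topsLE_sort {t : Finset ℕ} (ht : t.Nonempty) {c : ℕ} (hc : t.min < c) :
    TopsLE [t.sort (· ≤ ·)] c := by
  obtain ⟨l, hl⟩ := Finset.exists_sort_eq_min'_cons ht
  rw [hl]
  refine topsLE_cons ?_ (fun _ => by simp)
  rw [← WithTop.coe_le_coe, Finset.coe_min']
  exact hc.le

theorem foldl_PSinsert_reversePatienceWord (T : List (Finset ℕ)) {ps : List (List ℕ)}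
    (hne : ∀ t ∈ T, t.Nonempty) (hmin : T.Pairwise fun s t => s.min < t.min)
    (hps : ∀ t ∈ T, ∀ c ∈ t, TopsLE ps c) :
    ((T.map fun t => (t.sort (· ≤ ·)).reverse).flatten).foldl (fun ps c => PSinsert c ps) ps
      = ps ++ T.map fun t => t.sort (· ≤ ·) := by
  induction T generalizing ps with
  | nil => simp
  | cons t T ih =>
    have ht := hne t List.mem_cons_self
    rw [List.map_cons, List.flatten_cons, List.foldl_append,
      foldl_PSinsert_sort_reverse ht (hps t List.mem_cons_self _ (t.min'_mem ht)),
      ih (fun s hs => hne s (List.mem_cons_of_mem _ hs)) hmin.of_cons]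
    · simp
    · intro s hs c hc
      refine topsLE_append.2 ⟨hps s (List.mem_cons_of_mem _ hs) c hc, topsLE_sort ht ?_⟩
      exact (List.rel_of_pairwise_cons hmin hs).trans_le (Finset.min_le hc)

theorem List.pairwise_of_forall_getD {α : Type*} {R : α → α → Prop} {l : List α} (d : α)
    (h : ∀ i j, i < j → j < l.length → R (l.getD i d) (l.getD j d)) : l.Pairwise R := by
  refine List.pairwise_iff_getElem.2 fun i j hi hj hij => ?_
  simpa only [List.getD_eq_getElem _ _ hi, List.getD_eq_getElem _ _ hj] using h i j hij hj

theorem stmt1_general (T : List (Finset ℕ))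
    (hne : ∀ t ∈ T, t.Nonempty)
    (hmin : ∀ i j : ℕ, i < j → j < T.length → (T.getD i ∅).min < (T.getD j ∅).min) :
    (PSpiles ((T.map fun t => (t.sort (· ≤ ·)).reverse).flatten)).map List.toFinset = T := by
  rw [PSpiles, foldl_PSinsert_reversePatienceWord T hne (List.pairwise_of_forall_getD ∅ hmin)
    (by simp [TopsLE]), List.nil_append, List.map_map]
  conv_rhs => rw [← List.map_id T]
  exact List.map_congr_left fun t _ => Finset.sort_toFinset t _

/-- For every set partition `T = (t_1,…,t_k)` of `{1,…,n}`, listed so that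
the minima of the blocks increase, the permutation `τ = RPW(T)` (the concatenation of
the blocks, each written in decreasing order) has Patience Sorting pile configuration
exactly the sequence of piles `(t_1,…,t_k)`; in particular such a permutation exists. -/
theorem stmt1 (n : ℕ) (T : List (Finset ℕ))
    (hne : ∀ t ∈ T, t.Nonempty)
    (hdisj : List.Pairwise Disjoint T)
    (hcover : T.foldr (· ∪ ·) ∅ = Finset.Icc 1 n)
    (hmin : ∀ i j : ℕ, i < j → j < T.length → (T.getD i ∅).min < (T.getD j ∅).min) :
    (PSpiles ((T.map fun t => (t.sort (· ≤ ·)).reverse).flatten)).map List.toFinset = T :=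
  stmt1_general T hne hmin
end

section
/- For every permutation σ of {1,…,n} and every j, the j-th pile r_j of the pile configuration R(σ) produced by Patience Sorting consists exactly of the entries of the j-th left-to-right minima subsequence s_j of σ; moreover the entries of r_j read from bottom to top occur in σ in the same order as s_j read left to right. -/
/-- The left-to-right minima subsequence of a word `w`: the entries `w(j)` with
`w(j) = min {w(i) : i ≤ j}` (here: `w(j) ≤ w(i)` for all `i < j`), in order. -/
def lrMin (w : List ℕ) : List ℕ :=
  ((List.range w.length).filter
    (fun j => decide (∀ i, i < j → w.getD j 0 ≤ w.getD i 0))).map (fun j => w.getD j 0)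

/-- The word obtained from `w` by deleting the entries of its left-to-right minima
subsequence (keeping the remaining entries in order). -/
def lrRest (w : List ℕ) : List ℕ :=
  ((List.range w.length).filter
    (fun j => !decide (∀ i, i < j → w.getD j 0 ≤ w.getD i 0))).map (fun j => w.getD j 0)

/-- `sSeq w j` is the `(j+1)`-st left-to-right minima subsequence of `w`: `sSeq w 0`
is the left-to-right minima subsequence of `w`, and `sSeq w (k+1)` is obtained by
deleting the earlier subsequences first. -/
def sSeq : List ℕ → ℕ → List ℕ
  | w, 0 => lrMin w
  | w, Nat.succ k => sSeq (lrRest w) k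

/-!
The first card `c` of a word stays at the bottom of the first pile, and a later card lands
on that pile exactly when it is smaller than the pile's current top, i.e. when it is a
left-to-right minimum of the word. The cards that miss the first pile meet only the other
piles, in their original order, so those piles are exactly Patience Sorting of the word with
its left-to-right minima deleted. Hence `PSpiles (c :: w)` is the first left-to-right minima
subsequence followed by `PSpiles` of the rest, and induction on `j` gives the theorem.
For a word with distinct entries the strict comparison made by Patience Sorting agrees with
the non-strict one in `lrMin`.
-/

def lrMinBelow : ℕ → List ℕ → List ℕ
  | _, [] => []
  | m, c :: w => if c < m then c :: lrMinBelow c w else lrMinBelow m w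

def lrRestBelow : ℕ → List ℕ → List ℕ
  | _, [] => []
  | m, c :: w => if c < m then lrRestBelow c w else c :: lrRestBelow m w

theorem foldl_PSinsert_cons (w : List ℕ) (x : ℕ) (p : List ℕ) (ps : List (List ℕ)) :
    w.foldl (fun ps c => PSinsert c ps) ((x :: p) :: ps) =
      ((lrMinBelow x w).reverse ++ x :: p) ::
        (lrRestBelow x w).foldl (fun ps c => PSinsert c ps) ps := by
  induction w generalizing x p ps with
  | nil => rfl
  | cons c w ih =>
    by_cases hc : c < x <;> simp [PSinsert, lrMinBelow, lrRestBelow, hc, ih]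

theorem PSpiles_cons (c : ℕ) (w : List ℕ) :
    PSpiles (c :: w) = ((lrMinBelow c w).reverse ++ [c]) :: PSpiles (lrRestBelow c w) :=
  foldl_PSinsert_cons w c [] []

theorem lrRestBelow_sublist (m : ℕ) (w : List ℕ) : (lrRestBelow m w).Sublist w := by
  induction w generalizing m with
  | nil => exact .slnil
  | cons c w ih =>
    unfold lrRestBelow
    split
    · exact (ih c).cons c
    · exact (ih m).cons_cons c

def entriesWhere (p : ℕ → Bool) (w : List ℕ) : List ℕ :=
  ((List.range w.length).filter p).map (w.getD · 0)

theorem entriesWhere_cons (p : ℕ → Bool) (c : ℕ) (w : List ℕ) :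
    entriesWhere p (c :: w) =
      if p 0 then c :: entriesWhere (fun j => p (j + 1)) w
      else entriesWhere (fun j => p (j + 1)) w := by
  unfold entriesWhere
  rw [List.length_cons, List.range_succ_eq_map, List.filter_cons, List.filter_map]
  split <;> simp [Function.comp_def]

theorem entriesWhere_congr {p q : ℕ → Bool} {w : List ℕ} (h : ∀ j < w.length, p j = q j) :
    entriesWhere p w = entriesWhere q w := by
  unfold entriesWhere
  rw [List.filter_congr fun j hj => h j (List.mem_range.mp hj)]

theorem getD_cons_succ_lt_iff (m c j : ℕ) (w : List ℕ) :
    ((c :: w).getD (j + 1) 0 < m ∧ ∀ i < j + 1, (c :: w).getD (j + 1) 0 < (c :: w).getD i 0) ↔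
      (w.getD j 0 < min m c ∧ ∀ i < j, w.getD j 0 < w.getD i 0) := by
  simp only [Nat.forall_lt_succ_left, List.getD_cons_zero, List.getD_cons_succ, lt_min_iff,
    and_assoc]

theorem getD_cons_zero_lt_iff (m c : ℕ) (w : List ℕ) :
    ((c :: w).getD 0 0 < m ∧ ∀ i < 0, (c :: w).getD 0 0 < (c :: w).getD i 0) ↔ c < m := by
  simp

theorem entriesWhere_lrMinBelow (m : ℕ) (w : List ℕ) :
    entriesWhere (fun j => decide (w.getD j 0 < m ∧ ∀ i < j, w.getD j 0 < w.getD i 0)) w =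
      lrMinBelow m w := by
  induction w generalizing m with
  | nil => rfl
  | cons c w ih =>
    simp only [entriesWhere_cons, getD_cons_zero_lt_iff, getD_cons_succ_lt_iff, lrMinBelow]
    by_cases hc : c < m
    · simp only [hc, decide_true, ↓reduceIte, min_eq_right hc.le, ih]
    · simp only [hc, decide_false, Bool.false_eq_true, ↓reduceIte, min_eq_left (not_lt.mp hc),
        ih]

theorem entriesWhere_lrRestBelow (m : ℕ) (w : List ℕ) :
    entriesWhere (fun j => !decide (w.getD j 0 < m ∧ ∀ i < j, w.getD j 0 < w.getD i 0)) w =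
      lrRestBelow m w := by
  induction w generalizing m with
  | nil => rfl
  | cons c w ih =>
    simp only [entriesWhere_cons, getD_cons_zero_lt_iff, getD_cons_succ_lt_iff, lrRestBelow]
    by_cases hc : c < m
    · simp only [hc, decide_true, Bool.not_true, Bool.false_eq_true, ↓reduceIte,
        min_eq_right hc.le, ih]
    · simp only [hc, decide_false, Bool.not_false, ↓reduceIte, min_eq_left (not_lt.mp hc), ih]

theorem List.Nodup.forall_getD_le_iff_lt {v : List ℕ} (hv : v.Nodup) {j : ℕ}
    (hj : j < v.length) :
    (∀ i < j, v.getD j 0 ≤ v.getD i 0) ↔ ∀ i < j, v.getD j 0 < v.getD i 0 := by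
  refine forall₂_congr fun i hi => (Ne.le_iff_lt fun h => hi.ne' ?_)
  rw [List.getD_eq_getElem _ _ hj, List.getD_eq_getElem _ _ (hi.trans hj)] at h
  exact (hv.getElem_inj_iff).mp h

theorem forall_getD_cons_succ_le_iff {c : ℕ} {w : List ℕ} (h : (c :: w).Nodup) {j : ℕ}
    (hj : j < w.length) :
    (∀ i < j + 1, (c :: w).getD (j + 1) 0 ≤ (c :: w).getD i 0) ↔
      (w.getD j 0 < c ∧ ∀ i < j, w.getD j 0 < w.getD i 0) := by
  rw [h.forall_getD_le_iff_lt (by simpa using hj), Nat.forall_lt_succ_left]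
  simp only [List.getD_cons_zero, List.getD_cons_succ]

theorem lrMin_cons_of_nodup {c : ℕ} {w : List ℕ} (h : (c :: w).Nodup) :
    lrMin (c :: w) = c :: lrMinBelow c w := by
  change entriesWhere (fun j => decide (∀ i < j, (c :: w).getD j 0 ≤ (c :: w).getD i 0)) _ = _
  rw [entriesWhere_cons, ← entriesWhere_lrMinBelow, if_pos (by simp)]
  exact congrArg _ <| entriesWhere_congr fun j hj =>
    decide_eq_decide.mpr (forall_getD_cons_succ_le_iff h hj)

theorem lrRest_cons_of_nodup {c : ℕ} {w : List ℕ} (h : (c :: w).Nodup) :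
    lrRest (c :: w) = lrRestBelow c w := by
  change entriesWhere (fun j => !decide (∀ i < j, (c :: w).getD j 0 ≤ (c :: w).getD i 0)) _ = _
  rw [entriesWhere_cons, ← entriesWhere_lrRestBelow, if_neg (by simp)]
  exact entriesWhere_congr fun j hj =>
    congrArg _ (decide_eq_decide.mpr (forall_getD_cons_succ_le_iff h hj))

theorem sSeq_nil (j : ℕ) : sSeq [] j = [] := by
  induction j with
  | zero => rfl
  | succ j ih => exact ih

theorem PSpiles_getD_reverse {w : List ℕ} (hw : w.Nodup) (j : ℕ) :
    ((PSpiles w).getD j []).reverse = sSeq w j := by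
  induction j generalizing w with
  | zero =>
    cases w with
    | nil => rfl
    | cons c w =>
      rw [PSpiles_cons, List.getD_cons_zero, List.reverse_append, List.reverse_reverse]
      exact (lrMin_cons_of_nodup hw).symm
  | succ j ih =>
    cases w with
    | nil => exact (sSeq_nil _).symm
    | cons c w =>
      have hrest : (lrRestBelow c w).Nodup := hw.of_cons.sublist (lrRestBelow_sublist c w)
      rw [PSpiles_cons, List.getD_cons_succ, ih hrest, sSeq, lrRest_cons_of_nodup hw]

theorem permWord_nodup {n : ℕ} (σ : Equiv.Perm (Fin n)) : (permWord σ).Nodup :=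
  List.nodup_ofFn.mpr fun _ _ h => σ.injective (Fin.val_injective (Nat.succ_injective h))

theorem stmt3_general (n : ℕ) (σ : Equiv.Perm (Fin n)) (j : ℕ) :
    ((PSpiles (permWord σ)).getD j []).reverse = sSeq (permWord σ) j :=
  PSpiles_getD_reverse (permWord_nodup σ) j

/-- For every permutation `σ` of `{1,…,n}` and every `j`, the `j`-th pile of
`R(σ)` consists exactly of the entries of the `j`-th left-to-right minima subsequence of
`σ`, and its entries read from bottom to top (i.e., the stored top-first increasing list
reversed) occur in the same order as that subsequence read left to right. -/
theorem stmt3 (n : ℕ) (σ : Equiv.Perm (Fin n)) (j : ℕ)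
    (hj : j < (PSpiles (permWord σ)).length) :
    ((PSpiles (permWord σ)).getD j []).reverse = sSeq (permWord σ) j :=
  stmt3_general n σ j
end

section
/- For every permutation σ of {1,…,n} and every position t, the entry σ(t) is placed into the i-th pile r_i of R(σ) under Patience Sorting if and only if the longest increasing subsequence of σ ending at position t has length exactly i (equivalently, σ(t) occurs at the end of an increasing subsequence of σ of length i but not at the end of one of length i+1). -/
/-- `IncSeqEndAt w t l`: `l` is a list of (0-based) positions of `w` forming an
increasing subsequence of `w` ending at position `t`: the positions are strictly
increasing, the corresponding values are strictly increasing, and the last position is `t`. -/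
def IncSeqEndAt (w : List ℕ) (t : ℕ) (l : List ℕ) : Prop :=
  l.Chain' (· < ·) ∧ (l.map fun a => w.getD a 0).Chain' (· < ·) ∧
  (∀ a ∈ l, a < w.length) ∧ l.getLast? = some t

/-!
Patience sorting keeps in pile `j` exactly those cards played so far at which the longest
increasing subsequence ending there has length `j + 1`. Each pile increases downward from its
top and the tops increase from left to right, so when a card `c` arrives, every pile left of
the first one whose top exceeds `c` has a top below `c` (an earlier, smaller card closing an
increasing subsequence of that pile's length), while every card in that pile or further right
exceeds `c`. Hence the longest increasing subsequence ending at `c` is one longer than the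
number of piles to the left of the pile `c` lands on.
-/

namespace PatienceSorting

theorem mem_take_iff_exists_getD {w : List ℕ} {k v : ℕ} :
    v ∈ w.take k ↔ ∃ s < k, s < w.length ∧ w.getD s 0 = v := by
  simp only [List.mem_take_iff_getElem, lt_min_iff]
  constructor
  · rintro ⟨s, ⟨hsk, hs⟩, rfl⟩
    exact ⟨s, hsk, hs, List.getD_eq_getElem _ _ hs⟩
  · rintro ⟨s, hsk, hs, rfl⟩
    exact ⟨s, ⟨hsk, hs⟩, (List.getD_eq_getElem _ _ hs).symm⟩

theorem getD_eq_getD_iff {w : List ℕ} (hw : w.Nodup) {s t : ℕ} (hs : s < w.length)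
    (ht : t < w.length) :
    w.getD s 0 = w.getD t 0 ↔ s = t := by
  rw [List.getD_eq_getElem _ _ hs, List.getD_eq_getElem _ _ ht, hw.getElem_inj_iff]

theorem mem_flatten_iff_exists_mem_getD {ps : List (List ℕ)} {v : ℕ} :
    v ∈ ps.flatten ↔ ∃ j, v ∈ ps.getD j [] := by
  rw [List.mem_flatten]
  constructor
  · rintro ⟨p, hp, hv⟩
    obtain ⟨j, hj, rfl⟩ := List.mem_iff_getElem.mp hp
    exact ⟨j, by rwa [List.getD_eq_getElem _ _ hj]⟩
  · rintro ⟨j, hv⟩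
    by_cases hj : j < ps.length
    · rw [List.getD_eq_getElem _ _ hj] at hv
      exact ⟨_, List.getElem_mem hj, hv⟩
    · rw [List.getD_eq_default _ _ (not_lt.mp hj)] at hv
      simp at hv

theorem headD_le_of_mem {p : List ℕ} (hp : p.Pairwise (· < ·)) {v : ℕ} (hv : v ∈ p) :
    p.headD 0 ≤ v := by
  cases p with
  | nil => simp at hv
  | cons a l =>
    rcases List.mem_cons.mp hv with rfl | hv
    · simp
    · exact (List.pairwise_cons.mp hp).1 v hv |>.le

def pileIndex (c : ℕ) : List (List ℕ) → ℕ
  | [] => 0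
  | [] :: ps => pileIndex c ps + 1
  | (x :: _) :: ps => if c < x then 0 else pileIndex c ps + 1

theorem mem_getD_PSinsert {c v : ℕ} : ∀ {ps : List (List ℕ)} {j : ℕ},
    v ∈ (PSinsert c ps).getD j [] ↔ v = c ∧ j = pileIndex c ps ∨ v ∈ ps.getD j []
  | [], 0 | [], _ + 1 | [] :: _, 0 => by simp [PSinsert, pileIndex]
  | [] :: ps, j + 1 => by
      simp only [PSinsert, pileIndex, List.getD_cons_succ, mem_getD_PSinsert, add_left_inj]
  | (x :: p) :: ps, j => by
      by_cases h : c < x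
      · cases j <;> simp [PSinsert, pileIndex, h]
      · cases j
        · simp [PSinsert, pileIndex, h]
        · simp only [PSinsert, pileIndex, if_neg h, List.getD_cons_succ, mem_getD_PSinsert,
            add_left_inj]

theorem headD_eq_or_mem_of_mem_PSinsert {c : ℕ} : ∀ {ps : List (List ℕ)} {p : List ℕ},
    p ∈ PSinsert c ps → p.headD 0 = c ∨ p ∈ ps
  | [], p, hp => by simp_all [PSinsert]
  | [] :: ps, p, hp => by
      simp only [PSinsert, List.mem_cons] at hp ⊢
      rcases hp with rfl | hp
      · simp
      · exact (headD_eq_or_mem_of_mem_PSinsert hp).imp_right Or.inr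
  | (x :: q) :: ps, p, hp => by
      by_cases h : c < x
      · simp only [PSinsert, if_pos h, List.mem_cons] at hp ⊢
        rcases hp with rfl | hp <;> simp [*]
      · simp only [PSinsert, if_neg h, List.mem_cons] at hp ⊢
        rcases hp with rfl | hp
        · simp
        · exact (headD_eq_or_mem_of_mem_PSinsert hp).imp_right Or.inr

theorem perm_flatten_PSinsert (c : ℕ) : ∀ ps : List (List ℕ),
    (PSinsert c ps).flatten.Perm (c :: ps.flatten)
  | [] => by simp [PSinsert]
  | [] :: ps => by simpa [PSinsert] using perm_flatten_PSinsert c ps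
  | (x :: p) :: ps => by
      by_cases h : c < x
      · simp [PSinsert, h]
      · simp only [PSinsert, if_neg h, List.flatten_cons]
        exact ((perm_flatten_PSinsert c ps).append_left _).trans List.perm_middle

structure IsPiles (ps : List (List ℕ)) : Prop where
  ne_nil : ∀ p ∈ ps, p ≠ []
  sorted : ∀ p ∈ ps, p.Pairwise (· < ·)
  heads_sorted : (ps.map (·.headD 0)).Pairwise (· < ·)

theorem isPiles_nil : IsPiles [] := ⟨by simp, by simp, by simp⟩

theorem isPiles_cons {p : List ℕ} {ps : List (List ℕ)} :
    IsPiles (p :: ps) ↔ p ≠ [] ∧ p.Pairwise (· < ·) ∧ (∀ q ∈ ps, p.headD 0 < q.headD 0) ∧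
      IsPiles ps := by
  constructor
  · rintro ⟨hne, hs, hh⟩
    simp only [List.map_cons, List.pairwise_cons, List.mem_map] at hh
    exact ⟨hne p (by simp), hs p (by simp), fun q hq => hh.1 _ ⟨q, hq, rfl⟩,
      fun q hq => hne q (by simp [hq]), fun q hq => hs q (by simp [hq]), hh.2⟩
  · rintro ⟨hne, hs, hh, h⟩
    refine ⟨by simpa [hne] using h.ne_nil, by simpa [hs] using h.sorted, ?_⟩
    simp only [List.map_cons, List.pairwise_cons, List.mem_map, forall_exists_index, and_imp,
      forall_apply_eq_imp_iff₂]
    exact ⟨hh, h.heads_sorted⟩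

theorem isPiles_PSinsert {c : ℕ} : ∀ {ps : List (List ℕ)}, IsPiles ps → c ∉ ps.flatten →
    IsPiles (PSinsert c ps)
  | [], _, _ => by simp [PSinsert, isPiles_cons, isPiles_nil]
  | [] :: _, h, _ => absurd rfl (h.ne_nil [] (by simp))
  | (x :: p) :: ps, h, hc => by
      obtain ⟨-, hs, hh, h⟩ := isPiles_cons.mp h
      by_cases hcx : c < x
      · simp only [PSinsert, if_pos hcx, isPiles_cons]
        refine ⟨by simp, List.pairwise_cons.mpr ⟨fun y hy => ?_, hs⟩,
          fun q hq => hcx.trans (hh q hq), h⟩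
        exact hcx.trans_le (headD_le_of_mem hs hy)
      · have hxc : x < c := by
          have : c ≠ x := fun e => hc (by simp [e])
          omega
        simp only [PSinsert, if_neg hcx, isPiles_cons]
        refine ⟨by simp, hs, fun q hq => ?_, isPiles_PSinsert h fun hc' => hc (by simp [hc'])⟩
        rcases headD_eq_or_mem_of_mem_PSinsert hq with hq | hq
        · rw [hq]; exact hxc
        · exact hh q hq

theorem IsPiles.lt_of_pileIndex_le {c v : ℕ} : ∀ {ps : List (List ℕ)} {j : ℕ}, IsPiles ps →
    pileIndex c ps ≤ j → v ∈ ps.getD j [] → c < v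
  | [], j, _, _, hv => by simp at hv
  | [] :: _, _, h, _, _ => absurd rfl (h.ne_nil [] (by simp))
  | (x :: p) :: ps, j, h, hj, hv => by
      obtain ⟨-, hs, hh, h⟩ := isPiles_cons.mp h
      by_cases hcx : c < x
      · cases j with
        | zero => exact hcx.trans_le (headD_le_of_mem hs hv)
        | succ m =>
          obtain ⟨q, hq, hvq⟩ :=
            List.mem_flatten.mp (mem_flatten_iff_exists_mem_getD.mpr ⟨m, hv⟩)
          exact (hcx.trans (hh q hq)).trans_le (headD_le_of_mem (h.sorted q hq) hvq)
      · simp only [pileIndex, if_neg hcx] at hj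
        cases j with
        | zero => omega
        | succ m => exact h.lt_of_pileIndex_le (by omega) hv

theorem IsPiles.exists_mem_le_of_lt_pileIndex {c : ℕ} : ∀ {ps : List (List ℕ)} {j : ℕ},
    IsPiles ps → j < pileIndex c ps → ∃ v ∈ ps.getD j [], v ≤ c
  | [], j, _, hj => by simp [pileIndex] at hj
  | [] :: _, _, h, _ => absurd rfl (h.ne_nil [] (by simp))
  | (x :: p) :: ps, j, h, hj => by
      by_cases hcx : c < x
      · simp [pileIndex, hcx] at hj
      · simp only [pileIndex, if_neg hcx] at hj
        cases j with
        | zero => exact ⟨x, by simp, not_lt.mp hcx⟩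
        | succ m => exact (isPiles_cons.mp h).2.2.2.exists_mem_le_of_lt_pileIndex (by omega)

section IncreasingSubsequences

variable {w : List ℕ} {s t : ℕ} {l : List ℕ}

def incSeqLengths (w : List ℕ) (t : ℕ) : Set ℕ :=
  {m | ∃ l, IncSeqEndAt w t l ∧ l.length = m}

theorem incSeqEndAt_singleton (ht : t < w.length) : IncSeqEndAt w t [t] :=
  ⟨List.isChain_singleton t, List.isChain_singleton _, by simpa using ht, rfl⟩

theorem IncSeqEndAt.concat (hl : IncSeqEndAt w s l) (hst : s < t)
    (hlt : w.getD s 0 < w.getD t 0) (ht : t < w.length) : IncSeqEndAt w t (l ++ [t]) := by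
  obtain ⟨hpos, hval, hlen, hlast⟩ := hl
  refine ⟨hpos.append (List.isChain_singleton t) ?_, ?_, ?_, List.getLast?_concat⟩
  · simpa [hlast] using hst
  · rw [List.map_append]
    refine hval.append (List.isChain_singleton _) ?_
    simpa [List.getLast?_map, hlast] using hlt
  · simpa [or_imp, forall_and] using ⟨hlen, ht⟩

theorem IncSeqEndAt.eq_singleton_or_concat (hl : IncSeqEndAt w t l) :
    l = [t] ∨ ∃ s l', l = l' ++ [t] ∧ IncSeqEndAt w s l' ∧ s < t ∧ w.getD s 0 < w.getD t 0 := by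
  obtain ⟨hpos, hval, hlen, hlast⟩ := hl
  obtain ⟨l', rfl⟩ := List.getLast?_eq_some_iff.mp hlast
  rcases List.eq_nil_or_concat' l' with rfl | ⟨l'', s, rfl⟩
  · exact Or.inl rfl
  rw [List.map_append] at hval
  refine Or.inr ⟨s, l'' ++ [s], rfl, ⟨hpos.left_of_append, hval.left_of_append,
    fun a ha => hlen a (List.mem_append_left _ ha), List.getLast?_concat⟩, ?_, ?_⟩
  · simpa using (List.isChain_append.mp hpos).2.2
  · simpa using (List.isChain_append.mp hval).2.2

theorem isGreatest_incSeqLengths {r : ℕ} (ht : t < w.length)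
    (hle : ∀ s < t, w.getD s 0 < w.getD t 0 → ∀ m ∈ incSeqLengths w s, m ≤ r)
    (hr : r = 0 ∨ ∃ s < t, w.getD s 0 < w.getD t 0 ∧ r ∈ incSeqLengths w s) :
    IsGreatest (incSeqLengths w t) (r + 1) := by
  refine ⟨?_, ?_⟩
  · rcases hr with rfl | ⟨s, hst, hlt, l, hl, rfl⟩
    · exact ⟨[t], incSeqEndAt_singleton ht, rfl⟩
    · exact ⟨l ++ [t], IncSeqEndAt.concat hl hst hlt ht, by simp⟩
  · rintro _ ⟨l, hl, rfl⟩
    rcases IncSeqEndAt.eq_singleton_or_concat hl with rfl | ⟨s, l', rfl, hl', hst, hlt⟩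
    · simp
    · simpa using hle s hst hlt _ ⟨l', hl', rfl⟩

end IncreasingSubsequences

structure Invariant (w : List ℕ) (k : ℕ) (ps : List (List ℕ)) : Prop where
  isPiles : IsPiles ps
  perm : ps.flatten.Perm (w.take k)
  mem_iff : ∀ s < k, ∀ j, w.getD s 0 ∈ ps.getD j [] ↔ IsGreatest (incSeqLengths w s) (j + 1)

section Invariant

variable {w : List ℕ} {k : ℕ} {ps : List (List ℕ)}

theorem Invariant.exists_getD_eq (h : Invariant w k ps) {j v : ℕ} (hv : v ∈ ps.getD j []) :
    ∃ s < k, w.getD s 0 = v := by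
  obtain ⟨s, hsk, -, rfl⟩ :=
    mem_take_iff_exists_getD.mp (h.perm.subset (mem_flatten_iff_exists_mem_getD.mpr ⟨j, hv⟩))
  exact ⟨s, hsk, rfl⟩

theorem Invariant.exists_mem_getD (h : Invariant w k ps) {s : ℕ} (hsk : s < k)
    (hs : s < w.length) : ∃ j, w.getD s 0 ∈ ps.getD j [] :=
  mem_flatten_iff_exists_mem_getD.mp (h.perm.symm.subset (mem_take_iff_exists_getD.mpr
    ⟨s, hsk, hs, rfl⟩))

theorem Invariant.getD_not_mem_flatten (h : Invariant w k ps) (hw : w.Nodup)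
    (hk : k < w.length) : w.getD k 0 ∉ ps.flatten := fun hmem => by
  obtain ⟨s, hsk, hs, hsv⟩ := mem_take_iff_exists_getD.mp (h.perm.subset hmem)
  exact hsk.ne ((getD_eq_getD_iff hw hs hk).mp hsv)

theorem Invariant.isGreatest_pileIndex (h : Invariant w k ps) (hw : w.Nodup)
    (hk : k < w.length) :
    IsGreatest (incSeqLengths w k) (pileIndex (w.getD k 0) ps + 1) := by
  have hfresh := h.getD_not_mem_flatten hw hk
  apply isGreatest_incSeqLengths hk
  · intro s hsk hlt m hm
    obtain ⟨j, hj⟩ := h.exists_mem_getD hsk (hsk.trans hk)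
    have hjk : j < pileIndex (w.getD k 0) ps := by
      by_contra hle
      exact (h.isPiles.lt_of_pileIndex_le (not_lt.mp hle) hj).not_gt hlt
    have := ((h.mem_iff s hsk j).mp hj).2 hm
    omega
  · cases hidx : pileIndex (w.getD k 0) ps with
    | zero => exact Or.inl rfl
    | succ m =>
      obtain ⟨v, hv, hvc⟩ :=
        h.isPiles.exists_mem_le_of_lt_pileIndex (c := w.getD k 0) (j := m) (by omega)
      obtain ⟨s, hsk, rfl⟩ := h.exists_getD_eq hv
      have hne : w.getD s 0 ≠ w.getD k 0 := fun e =>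
        hfresh (e ▸ mem_flatten_iff_exists_mem_getD.mpr ⟨m, hv⟩)
      exact Or.inr ⟨s, hsk, lt_of_le_of_ne hvc hne, ((h.mem_iff s hsk m).mp hv).1⟩

theorem invariant_PSinsert (h : Invariant w k ps) (hw : w.Nodup) (hk : k < w.length) :
    Invariant w (k + 1) (PSinsert (w.getD k 0) ps) where
  isPiles := isPiles_PSinsert h.isPiles (h.getD_not_mem_flatten hw hk)
  perm := by
    rw [List.take_add_one, List.getElem?_eq_getElem hk, Option.toList_some,
      ← List.getD_eq_getElem _ 0 hk]
    exact (perm_flatten_PSinsert _ ps).trans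
      ((h.perm.cons _).trans (List.perm_append_singleton _ _).symm)
  mem_iff s hs j := by
    rw [mem_getD_PSinsert]
    rcases Nat.lt_succ_iff_lt_or_eq.mp hs with hsk | rfl
    · rw [or_iff_right fun hc => hsk.ne ((getD_eq_getD_iff hw (hsk.trans hk) hk).mp hc.1),
        h.mem_iff s hsk j]
    · have hnot : w.getD s 0 ∉ ps.getD j [] := fun hv =>
        h.getD_not_mem_flatten hw hk (mem_flatten_iff_exists_mem_getD.mpr ⟨j, hv⟩)
      simp only [true_and, hnot, or_false]
      refine ⟨fun hj => hj ▸ h.isGreatest_pileIndex hw hk, fun hg => ?_⟩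
      have := hg.unique (h.isGreatest_pileIndex hw hk)
      omega

end Invariant

theorem PSpiles_take_add_one {w : List ℕ} {k : ℕ} (hk : k < w.length) :
    PSpiles (w.take (k + 1)) = PSinsert (w.getD k 0) (PSpiles (w.take k)) := by
  rw [PSpiles, PSpiles, List.take_add_one, List.getElem?_eq_getElem hk, Option.toList_some,
    List.foldl_append, List.getD_eq_getElem _ _ hk]
  rfl

theorem invariant_PSpiles_take {w : List ℕ} (hw : w.Nodup) :
    ∀ k ≤ w.length, Invariant w k (PSpiles (w.take k))
  | 0, _ => ⟨isPiles_nil, by simp [PSpiles], by simp⟩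
  | k + 1, hk => by
      rw [PSpiles_take_add_one hk]
      exact invariant_PSinsert (invariant_PSpiles_take hw k (by omega)) hw hk

end PatienceSorting

open PatienceSorting in
/-- For every permutation `σ` of `{1,…,n}` and position `t` (0-based), the
entry `σ(t)` is placed into the `(i+1)`-st pile (0-based index `i`) of `R(σ)` under
Patience Sorting if and only if the longest increasing subsequence of `σ` ending at
position `t` has length exactly `i + 1`. -/
theorem stmt4 (n : ℕ) (σ : Equiv.Perm (Fin n)) (t i : ℕ) (ht : t < n) :
    (permWord σ).getD t 0 ∈ (PSpiles (permWord σ)).getD i [] ↔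
    IsGreatest {m | ∃ l, IncSeqEndAt (permWord σ) t l ∧ l.length = m} (i + 1) := by
  have hlen : (permWord σ).length = n := List.length_ofFn
  have h := invariant_PSpiles_take (permWord_nodup σ) _ le_rfl
  rw [List.take_length] at h
  exact h.mem_iff t (by rwa [hlen]) i
end

section
/- For every permutation σ of {1,…,n}, the number of piles in the pile configuration R(σ) produced by Patience Sorting equals the length of the longest increasing subsequence of σ. -/
/-- `IncSeq w l`: `l` is a list of (0-based) positions of `w` forming an increasing
subsequence of `w`: strictly increasing positions with strictly increasing values. -/
def IncSeq (w : List ℕ) (l : List ℕ) : Prop :=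
  l.Chain' (· < ·) ∧ (l.map fun a => w.getD a 0).Chain' (· < ·) ∧ ∀ a ∈ l, a < w.length

/-!
Only the tops of the piles matter: they form an increasing list, and a new card `c` replaces
the leftmost top exceeding it, or is appended (`insertTop`). The invariant is that, for every
bound `v`, the number of tops below `v` is the length of a longest increasing subsequence with
all entries below `v`. Appending `c` to the word changes neither side for `v ≤ c`, and for
`v > c` both sides become the larger of the old value at `v` and one plus the value at `c`.
A bound above every entry then gives the theorem.
-/

theorem List.sublist_append_singleton_iff {α : Type*} {s w : List α} {c : α} :
    s.Sublist (w ++ [c]) ↔ s.Sublist w ∨ ∃ s', s = s' ++ [c] ∧ s'.Sublist w := by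
  simp only [List.sublist_append_iff, List.sublist_singleton]
  constructor
  · rintro ⟨s', _, rfl, hs', rfl | rfl⟩
    · exact Or.inl (by simpa using hs')
    · exact Or.inr ⟨s', rfl, hs'⟩
  · rintro (hs | ⟨s', rfl, hs'⟩)
    · exact ⟨s, [], by simp, hs, Or.inl rfl⟩
    · exact ⟨s', [c], rfl, hs', Or.inr rfl⟩

theorem List.sublist_range_iff {l : List ℕ} {n : ℕ} :
    l.Sublist (List.range n) ↔ l.Pairwise (· < ·) ∧ ∀ a ∈ l, a < n := by
  constructor
  · exact fun hl =>
      ⟨List.pairwise_lt_range.sublist hl, fun a ha => by simpa using hl.subset ha⟩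
  · rintro ⟨hinc, hlt⟩
    refine List.sublist_of_subperm_of_sortedLE
      (hinc.nodup.subperm fun a ha => by simpa using hlt a ha) ?_ ?_
    · exact (hinc.imp le_of_lt).sortedLE
    · exact (List.pairwise_lt_range.imp le_of_lt).sortedLE

def insertTop (c : ℕ) : List ℕ → List ℕ
  | [] => [c]
  | x :: t => if c < x then c :: t else x :: insertTop c t

def PStops (w : List ℕ) : List ℕ :=
  w.foldl (fun t c => insertTop c t) []

-- An empty pile has top `0` under `headD`, which `insertTop` never replaces, so no
-- nonemptiness assumption is needed.
theorem map_headD_PSinsert (c : ℕ) (ps : List (List ℕ)) :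
    (PSinsert c ps).map (·.headD 0) = insertTop c (ps.map (·.headD 0)) := by
  induction ps with
  | nil => rfl
  | cons p ps ih =>
    rcases p with _ | ⟨x, p⟩
    · simp only [PSinsert, List.map_cons, List.headD_nil, insertTop, Nat.not_lt_zero, if_false,
        ih]
    · by_cases hc : c < x <;> simp only [PSinsert, insertTop, hc, if_true, if_false,
        List.map_cons, List.headD_cons, ih]

theorem length_PSpiles (w : List ℕ) : (PSpiles w).length = (PStops w).length := by
  rw [PStops, ← List.length_map (f := fun p : List ℕ => p.headD 0), PSpiles,
    ← List.map_nil (f := fun p : List ℕ => p.headD 0)]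
  rw [List.foldl_hom _ fun ps c => (map_headD_PSinsert c ps).symm]

theorem PStops_append_singleton (w : List ℕ) (c : ℕ) :
    PStops (w ++ [c]) = insertTop c (PStops w) := by
  simp [PStops]

theorem mem_of_mem_insertTop {c x : ℕ} {t : List ℕ} (h : x ∈ insertTop c t) :
    x = c ∨ x ∈ t := by
  induction t with
  | nil => simpa [insertTop] using h
  | cons y t ih =>
    unfold insertTop at h
    split_ifs at h <;> aesop

theorem pairwise_insertTop {c : ℕ} {t : List ℕ} (ht : t.Pairwise (· < ·)) (hc : c ∉ t) :
    (insertTop c t).Pairwise (· < ·) := by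
  induction t with
  | nil => simp [insertTop]
  | cons x t ih =>
    rw [List.pairwise_cons] at ht
    rw [List.mem_cons, not_or] at hc
    unfold insertTop
    split_ifs with hcx
    · exact List.pairwise_cons.2 ⟨fun y hy => hcx.trans (ht.1 y hy), ht.2⟩
    · refine List.pairwise_cons.2 ⟨fun y hy => ?_, ih ht.2 hc.2⟩
      rcases mem_of_mem_insertTop hy with rfl | hy
      · omega
      · exact ht.1 y hy

theorem countP_insertTop_of_le {c v : ℕ} (t : List ℕ) (hv : v ≤ c) :
    (insertTop c t).countP (· < v) = t.countP (· < v) := by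
  induction t with
  | nil => simp [insertTop, hv.not_gt]
  | cons x t ih =>
    unfold insertTop
    split_ifs with hcx
    · simp [show ¬c < v by omega, show ¬x < v by omega]
    · simp [List.countP_cons, ih]

theorem countP_insertTop_of_lt {c v : ℕ} {t : List ℕ} (ht : t.Pairwise (· < ·)) (hc : c ∉ t)
    (hv : c < v) :
    (insertTop c t).countP (· < v) = max (t.countP (· < v)) (t.countP (· < c) + 1) := by
  induction t with
  | nil => simp [insertTop, hv]
  | cons x t ih =>
    rw [List.pairwise_cons] at ht
    rw [List.mem_cons, not_or] at hc
    unfold insertTop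
    split_ifs with hcx
    · have hc0 : t.countP (· < c) = 0 :=
        List.countP_eq_zero.2 fun y hy => by simpa using (hcx.trans (ht.1 y hy)).le
      by_cases hxv : x < v
      · simp [hxv, hv, hc0, hcx.le.not_gt]
      · have hv0 : t.countP (· < v) = 0 :=
          List.countP_eq_zero.2 fun y hy => by have := ht.1 y hy; simp; omega
        simp [hxv, hv, hc0, hv0, hcx.le.not_gt]
    · have hxc : x < c := by omega
      simp [ih ht.2 hc.2, hxc, hxc.trans hv]

def incSublistLengths (w : List ℕ) (v : ℕ) : Set ℕ :=
  {m | ∃ s : List ℕ,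
    s.Sublist w ∧ s.Pairwise (· < ·) ∧ (∀ x ∈ s, x < v) ∧ s.length = m}

theorem incSublistLengths_nil (v : ℕ) : incSublistLengths [] v = {0} := by
  ext m
  simp [incSublistLengths, eq_comm]

theorem incSublistLengths_append_singleton_of_le (w : List ℕ) {c v : ℕ} (hv : v ≤ c) :
    incSublistLengths (w ++ [c]) v = incSublistLengths w v := by
  ext m
  simp only [incSublistLengths, Set.mem_ofPred_eq, List.sublist_append_singleton_iff]
  constructor
  · rintro ⟨s, hs | ⟨s', rfl, -⟩, hinc, hlt, rfl⟩
    · exact ⟨s, hs, hinc, hlt, rfl⟩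
    · exact absurd (hlt c (by simp)) (by omega)
  · rintro ⟨s, hs, hinc, hlt, rfl⟩
    exact ⟨s, Or.inl hs, hinc, hlt, rfl⟩

theorem incSublistLengths_append_singleton_of_lt (w : List ℕ) {c v : ℕ} (hv : c < v) :
    incSublistLengths (w ++ [c]) v =
      incSublistLengths w v ∪ (· + 1) '' incSublistLengths w c := by
  ext m
  simp only [incSublistLengths, Set.mem_union, Set.mem_image, Set.mem_ofPred_eq,
    List.sublist_append_singleton_iff]
  constructor
  · rintro ⟨s, hs | ⟨s', rfl, hs'⟩, hinc, hlt, rfl⟩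
    · exact Or.inl ⟨s, hs, hinc, hlt, rfl⟩
    · rw [List.pairwise_append] at hinc
      exact Or.inr
        ⟨_, ⟨s', hs', hinc.1, fun x hx => hinc.2.2 x hx c (by simp), rfl⟩, by simp⟩
  · rintro (⟨s, hs, hinc, hlt, rfl⟩ | ⟨_, ⟨s', hs', hinc, hlt, rfl⟩, rfl⟩)
    · exact ⟨s, Or.inl hs, hinc, hlt, rfl⟩
    · refine ⟨s' ++ [c], Or.inr ⟨s', rfl, hs'⟩, ?_, ?_, by simp⟩
      · simpa [List.pairwise_append] using ⟨hinc, hlt⟩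
      · simpa [or_imp, forall_and, hv] using fun x hx => (hlt x hx).trans hv

theorem incSublistLengths_of_forall_lt {w : List ℕ} {v : ℕ} (h : ∀ x ∈ w, x < v) :
    incSublistLengths w v =
      {m | ∃ s : List ℕ, s.Sublist w ∧ s.Pairwise (· < ·) ∧ s.length = m} := by
  ext m
  exact exists_congr fun s =>
    ⟨fun ⟨hs, hinc, _, hm⟩ => ⟨hs, hinc, hm⟩,
      fun ⟨hs, hinc, hm⟩ => ⟨hs, hinc, fun x hx => h x (hs.subset hx), hm⟩⟩

theorem PStops_subset (w : List ℕ) : PStops w ⊆ w := by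
  induction w using List.reverseRecOn with
  | nil => simp [PStops]
  | append_singleton w c ih =>
    intro x hx
    rw [PStops_append_singleton] at hx
    rcases mem_of_mem_insertTop hx with rfl | hx
    · simp
    · exact List.mem_append_left _ (ih hx)

theorem not_mem_PStops_of_nodup {w : List ℕ} {c : ℕ} (hw : (w ++ [c]).Nodup) :
    c ∉ PStops w :=
  fun hc => (List.nodup_append.1 hw).2.2 _ (PStops_subset w hc) _ (List.mem_singleton_self c) rfl

theorem pairwise_PStops {w : List ℕ} (hw : w.Nodup) : (PStops w).Pairwise (· < ·) := by
  induction w using List.reverseRecOn with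
  | nil => simp [PStops]
  | append_singleton w c ih =>
    rw [PStops_append_singleton]
    exact pairwise_insertTop (ih ((List.sublist_append_left w [c]).nodup hw))
      (not_mem_PStops_of_nodup hw)

theorem isGreatest_countP_PStops {w : List ℕ} (hw : w.Nodup) (v : ℕ) :
    IsGreatest (incSublistLengths w v) ((PStops w).countP (· < v)) := by
  induction w using List.reverseRecOn generalizing v with
  | nil => simp [incSublistLengths_nil, PStops]
  | append_singleton w c ih =>
    have hw' : w.Nodup := (List.sublist_append_left w [c]).nodup hw
    rw [PStops_append_singleton]
    rcases le_or_gt v c with hv | hv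
    · rw [incSublistLengths_append_singleton_of_le w hv, countP_insertTop_of_le _ hv]
      exact ih hw' v
    · rw [incSublistLengths_append_singleton_of_lt w hv,
        countP_insertTop_of_lt (pairwise_PStops hw') (not_mem_PStops_of_nodup hw) hv]
      exact (ih hw' v).union ((add_left_mono (a := 1)).map_isGreatest (ih hw' c))

theorem exists_incSeq_iff (w : List ℕ) (m : ℕ) :
    (∃ l, IncSeq w l ∧ l.length = m) ↔
      ∃ s : List ℕ, s.Sublist w ∧ s.Pairwise (· < ·) ∧ s.length = m := by
  have hw : (List.range w.length).map (w.getD · 0) = w :=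
    List.ext_getElem (by simp) fun i _ h => by simp [List.getElem?_eq_getElem h]
  constructor
  · rintro ⟨l, ⟨hl, hval, hlt⟩, rfl⟩
    refine ⟨l.map (w.getD · 0), ?_, List.isChain_iff_pairwise.1 hval, List.length_map _⟩
    simpa only [hw] using
      (List.sublist_range_iff.2 ⟨List.isChain_iff_pairwise.1 hl, hlt⟩).map (w.getD · 0)
  · rintro ⟨s, hs, hinc, rfl⟩
    rw [← hw, List.sublist_map_iff] at hs
    obtain ⟨l, hl, rfl⟩ := hs
    obtain ⟨hl, hlt⟩ := List.sublist_range_iff.1 hl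
    exact ⟨l, ⟨List.isChain_iff_pairwise.2 hl, List.isChain_iff_pairwise.2 hinc, hlt⟩,
      (List.length_map _).symm⟩

theorem isGreatest_length_PSpiles {w : List ℕ} (hw : w.Nodup) :
    IsGreatest {m | ∃ l, IncSeq w l ∧ l.length = m} (PSpiles w).length := by
  have hbound : ∀ x ∈ w, x < w.sum + 1 := fun _ hx => Nat.lt_succ_of_le (List.le_sum_of_mem hx)
  have hset : {m | ∃ l, IncSeq w l ∧ l.length = m} = incSublistLengths w (w.sum + 1) := by
    rw [incSublistLengths_of_forall_lt hbound]
    exact Set.ext fun m => exists_incSeq_iff w m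
  have hlen : (PStops w).countP (· < w.sum + 1) = (PStops w).length :=
    List.countP_eq_length.2 fun x hx => by simpa using hbound x (PStops_subset w hx)
  rw [hset, length_PSpiles, ← hlen]
  exact isGreatest_countP_PStops hw _

/-- For every permutation `σ` of `{1,…,n}`, the number of piles produced by
Patience Sorting equals the length of the longest increasing subsequence of `σ`. -/
theorem stmt5 (n : ℕ) (σ : Equiv.Perm (Fin n)) :
    IsGreatest {m | ∃ l, IncSeq (permWord σ) l ∧ l.length = m}
      (PSpiles (permWord σ)).length :=
  isGreatest_length_PSpiles <| List.nodup_ofFn.2 <|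
    (Nat.succ_injective.comp Fin.val_injective).comp σ.injective
end

section
/- If a permutation τ of {1,…,n} is obtained from a permutation σ by a single allowed interchange (swapping the adjacent entries σ(j), σ(j+1) of an occurrence i < j of the pattern 2-31 that is not contained in any occurrence of 3-1-42), then σ and τ have the same pile configuration under Patience Sorting: R(τ) = R(σ). -/
/-- `AllowedInterchange σ τ`: `τ` is obtained from `σ` by swapping the adjacent entries
`σ(j), σ(j+1)` of an occurrence `i < j` of the generalized pattern 2-31
(`σ(j+1) < σ(i) < σ(j)`) that is not contained in any occurrence of 3-1-42
(there is no `k` with `i < k < j` and `σ(k) < σ(j+1)`). -/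
def AllowedInterchange {n : ℕ} (σ τ : Equiv.Perm (Fin n)) : Prop :=
  ∃ (i j : ℕ) (hi : i < n) (hj : j + 1 < n),
    i < j ∧
    σ ⟨j + 1, hj⟩ < σ ⟨i, hi⟩ ∧ σ ⟨i, hi⟩ < σ ⟨j, Nat.lt_of_succ_lt hj⟩ ∧
    (¬ ∃ (k : ℕ) (hk : k < n), i < k ∧ k < j ∧ σ ⟨k, hk⟩ < σ ⟨j + 1, hj⟩) ∧
    τ = σ * Equiv.swap ⟨j, Nat.lt_of_succ_lt hj⟩ ⟨j + 1, hj⟩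

/-! Pile tops increase from left to right, and inserting `b < a` in either order gives the same
piles as soon as some pile top `t` satisfies `b < t < a`: then `b` lands on that pile or to its
left and `a` strictly to its right. Before position `j` of `σ` is processed, the pile that
received `σ(i)` has its top in `(σ(j+1), σ(i)]`, since a top is only ever replaced by a smaller
card and, the occurrence not being part of a 3-1-42, every card between positions `i` and `j`
exceeds `σ(j+1)`. -/

theorem List.eq_take_append_getElem_cons_getElem_cons {α : Type*} (l : List α) {j : ℕ}
    (hj : j + 1 < l.length) :
    l = l.take j ++ l[j] :: l[j + 1] :: l.drop (j + 2) := by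
  rw [← List.drop_eq_getElem_cons, ← List.drop_eq_getElem_cons, List.take_append_drop]

theorem List.ofFn_comp_swap_succ {α : Type*} {n : ℕ} (f : Fin n → α) {j : ℕ} (hj : j + 1 < n) :
    List.ofFn (f ∘ Equiv.swap ⟨j, by omega⟩ ⟨j + 1, hj⟩) =
      (List.ofFn f).take j ++ f ⟨j + 1, hj⟩ :: f ⟨j, by omega⟩ :: (List.ofFn f).drop (j + 2) := by
  have hswap : ∀ m (hm : m < n), m ≠ j → m ≠ j + 1 →
      Equiv.swap (⟨j, by omega⟩ : Fin n) ⟨j + 1, hj⟩ ⟨m, hm⟩ = ⟨m, hm⟩ := fun m hm h h' =>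
    Equiv.swap_apply_of_ne_of_ne (by simpa [Fin.ext_iff]) (by simpa [Fin.ext_iff])
  rw [List.eq_take_append_getElem_cons_getElem_cons (List.ofFn _) (by simpa)]
  congr 1
  · apply List.ext_getElem (by simp)
    intro m h1 h2
    simp only [List.length_take, List.length_ofFn, lt_inf_iff] at h1
    simp [hswap m (by omega) (by omega) (by omega)]
  · simp only [List.getElem_ofFn, Function.comp_apply, Equiv.swap_apply_left,
      Equiv.swap_apply_right, List.cons.injEq, true_and]
    apply List.ext_getElem (by simp)
    intro m h1 h2
    simp only [List.length_drop, List.length_ofFn] at h1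
    simp [hswap (j + 2 + m) (by omega) (by omega) (by omega)]

theorem PSinsert_mem_or {c : ℕ} {ps : List (List ℕ)} {p : List ℕ} (hp : p ∈ ps) :
    p ∈ PSinsert c ps ∨ (c < p.headI ∧ c :: p ∈ PSinsert c ps) := by
  induction ps with
  | nil => simp at hp
  | cons q ps ih =>
    rcases q with _ | ⟨x, q⟩
    · rcases List.mem_cons.mp hp with rfl | hp
      · simp [PSinsert]
      · exact (ih hp).imp (List.mem_cons_of_mem _) (And.imp_right (List.mem_cons_of_mem _))
    · by_cases hcx : c < x
      · rcases List.mem_cons.mp hp with rfl | hp <;> simp_all [PSinsert]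
      · rcases List.mem_cons.mp hp with rfl | hp
        · simp [PSinsert, hcx]
        · simp only [PSinsert, hcx, if_false]
          exact (ih hp).imp (List.mem_cons_of_mem _) (And.imp_right (List.mem_cons_of_mem _))

theorem exists_mem_PSinsert_headI_eq (c : ℕ) (ps : List (List ℕ)) :
    ∃ p ∈ PSinsert c ps, p.headI = c := by
  induction ps with
  | nil => exact ⟨[c], by simp [PSinsert]⟩
  | cons q ps ih =>
    obtain ⟨p, hp, hpc⟩ := ih
    rcases q with _ | ⟨x, q⟩
    · exact ⟨p, by simp [PSinsert, hp], hpc⟩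
    · by_cases hcx : c < x
      · exact ⟨c :: x :: q, by simp [PSinsert, hcx]⟩
      · exact ⟨p, by simp [PSinsert, hcx, hp], hpc⟩

theorem map_headI_PSinsert_subset (c : ℕ) (ps : List (List ℕ)) :
    (PSinsert c ps).map List.headI ⊆ c :: ps.map List.headI := by
  induction ps with
  | nil => simp [PSinsert]
  | cons q ps ih =>
    rcases q with _ | ⟨x, q⟩
    · simp only [PSinsert, List.map_cons]
      exact List.cons_subset.2
        ⟨by simp, List.Subset.trans ih (List.cons_subset_cons c (List.subset_cons_self _ _))⟩
    · by_cases hcx : c < x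
      · simp [PSinsert, hcx]
      · simp only [PSinsert, hcx, if_false, List.map_cons, List.headI_cons]
        exact List.cons_subset.2
          ⟨by simp, List.Subset.trans ih (List.cons_subset_cons c (List.subset_cons_self _ _))⟩

theorem pairwise_map_headI_PSinsert (c : ℕ) {ps : List (List ℕ)}
    (h : (ps.map List.headI).Pairwise (· ≤ ·)) :
    ((PSinsert c ps).map List.headI).Pairwise (· ≤ ·) := by
  induction ps with
  | nil => simp [PSinsert]
  | cons q ps ih =>
    simp only [List.map_cons, List.pairwise_cons] at h
    rcases q with _ | ⟨x, q⟩
    · simpa [PSinsert] using ih h.2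
    · by_cases hcx : c < x
      · simp only [PSinsert, hcx, if_true, List.map_cons, List.headI_cons, List.pairwise_cons]
        exact ⟨fun t ht => hcx.le.trans (h.1 t ht), h.2⟩
      · simp only [PSinsert, hcx, if_false, List.map_cons, List.headI_cons, List.pairwise_cons]
        refine ⟨fun t ht => ?_, ih h.2⟩
        rcases List.mem_cons.mp (map_headI_PSinsert_subset c ps ht) with rfl | ht
        · exact not_lt.mp hcx
        · exact h.1 t ht

theorem PSpiles_append (u v : List ℕ) :
    PSpiles (u ++ v) = v.foldl (fun ps c => PSinsert c ps) (PSpiles u) :=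
  List.foldl_append

theorem pairwise_map_headI_PSpiles (w : List ℕ) :
    ((PSpiles w).map List.headI).Pairwise (· ≤ ·) := by
  suffices ∀ ps : List (List ℕ), (ps.map List.headI).Pairwise (· ≤ ·) →
      ((w.foldl (fun ps c => PSinsert c ps) ps).map List.headI).Pairwise (· ≤ ·) from
    this [] List.Pairwise.nil
  induction w with
  | nil => exact fun _ h => h
  | cons c w ih => exact fun ps h => ih _ (pairwise_map_headI_PSinsert c h)

theorem exists_mem_foldl_PSinsert_headI_mem_Ioc {b t : ℕ} {l : List ℕ} (hl : ∀ c ∈ l, b < c)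
    {ps : List (List ℕ)} (h : ∃ p ∈ ps, p.headI ∈ Set.Ioc b t) :
    ∃ p ∈ l.foldl (fun ps c => PSinsert c ps) ps, p.headI ∈ Set.Ioc b t := by
  induction l generalizing ps with
  | nil => exact h
  | cons c l ih =>
    refine ih (fun x hx => hl x (List.mem_cons_of_mem c hx)) ?_
    obtain ⟨p, hp, hbp, hpt⟩ := h
    rcases PSinsert_mem_or (c := c) hp with hp' | ⟨hcp, hp'⟩
    · exact ⟨p, hp', hbp, hpt⟩
    · exact ⟨c :: p, hp', hl c List.mem_cons_self, hcp.le.trans hpt⟩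

theorem exists_mem_PSpiles_headI_mem_Ioc {u : List ℕ} {b i : ℕ} (hi : i < u.length)
    (hb : ∀ k (hk : k < u.length), i ≤ k → b < u[k]) :
    ∃ p ∈ PSpiles u, p.headI ∈ Set.Ioc b u[i] := by
  have hu : u = u.take i ++ u[i] :: u.drop (i + 1) := by
    rw [← List.drop_eq_getElem_cons, List.take_append_drop]
  suffices ∃ p ∈ PSpiles (u.take i ++ u[i] :: u.drop (i + 1)), p.headI ∈ Set.Ioc b u[i] by
    rwa [← hu] at this
  rw [PSpiles_append, List.foldl_cons]
  refine exists_mem_foldl_PSinsert_headI_mem_Ioc (fun c hc => ?_) ?_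
  · obtain ⟨k, hk, rfl⟩ := List.getElem_of_mem hc
    simpa using hb (i + 1 + k) (by simp only [List.length_drop] at hk; omega) (by omega)
  · obtain ⟨p, hp, hpc⟩ := exists_mem_PSinsert_headI_eq u[i] (PSpiles (u.take i))
    exact ⟨p, hp, by simp [hpc, hb i hi le_rfl]⟩

theorem PSinsert_comm_of_exists_headI_mem_Ioo {a b : ℕ} {ps : List (List ℕ)}
    (hsorted : (ps.map List.headI).Pairwise (· ≤ ·))
    (hwit : ∃ p ∈ ps, p.headI ∈ Set.Ioo b a) :
    PSinsert b (PSinsert a ps) = PSinsert a (PSinsert b ps) := by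
  induction ps with
  | nil => simp at hwit
  | cons q ps ih =>
    simp only [List.map_cons, List.pairwise_cons] at hsorted
    obtain ⟨p, hp, hbp, hpa⟩ := hwit
    rcases q with _ | ⟨x, q⟩
    · have hp : p ∈ ps := by
        rcases List.mem_cons.mp hp with rfl | hp
        · simp at hbp
        · exact hp
      simp only [PSinsert, ih hsorted.2 ⟨p, hp, hbp, hpa⟩]
    · by_cases hbx : b < x
      · have hxa : x < a := by
          rcases List.mem_cons.mp hp with rfl | hp
          · exact hpa
          · exact (hsorted.1 _ (List.mem_map_of_mem hp)).trans_lt hpa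
        simp [PSinsert, hbx, hxa.not_gt, (hbx.trans hxa).not_gt]
      · have hp : p ∈ ps := by
          rcases List.mem_cons.mp hp with rfl | hp
          · exact absurd hbp hbx
          · exact hp
        have hax : ¬ a < x := fun hax => hbx (hbp.trans (hpa.trans hax))
        simp only [PSinsert, hbx, hax, if_false, ih hsorted.2 ⟨p, hp, hbp, hpa⟩]

theorem PSpiles_append_cons_cons_comm {u w : List ℕ} {a b i : ℕ} (hi : i < u.length)
    (hb : ∀ k (hk : k < u.length), i ≤ k → b < u[k]) (ha : u[i] < a) :
    PSpiles (u ++ b :: a :: w) = PSpiles (u ++ a :: b :: w) := by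
  obtain ⟨p, hp, hbp, hpi⟩ := exists_mem_PSpiles_headI_mem_Ioc hi hb
  simp only [PSpiles_append, List.foldl_cons]
  rw [PSinsert_comm_of_exists_headI_mem_Ioo (pairwise_map_headI_PSpiles u)
    ⟨p, hp, hbp, hpi.trans_lt ha⟩]

theorem permWord_mul_swap {n : ℕ} (σ : Equiv.Perm (Fin n)) {j : ℕ} (hj : j + 1 < n) :
    permWord (σ * Equiv.swap ⟨j, by omega⟩ ⟨j + 1, hj⟩) =
      (permWord σ).take j ++ ((σ ⟨j + 1, hj⟩ : ℕ) + 1) :: ((σ ⟨j, by omega⟩ : ℕ) + 1) ::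
        (permWord σ).drop (j + 2) :=
  List.ofFn_comp_swap_succ (fun k => (σ k : ℕ) + 1) hj

theorem permWord_eq_take_append {n : ℕ} (σ : Equiv.Perm (Fin n)) {j : ℕ} (hj : j + 1 < n) :
    permWord σ = (permWord σ).take j ++ ((σ ⟨j, by omega⟩ : ℕ) + 1) ::
      ((σ ⟨j + 1, hj⟩ : ℕ) + 1) :: (permWord σ).drop (j + 2) := by
  simpa [permWord] using
    List.eq_take_append_getElem_cons_getElem_cons (permWord σ) (j := j) (by simpa [permWord])

/-- A single allowed interchange preserves the pile configuration under
Patience Sorting: if `τ` is obtained from `σ` by an allowed interchange then `R(τ) = R(σ)`. -/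
theorem stmt7 (n : ℕ) (σ τ : Equiv.Perm (Fin n)) (h : AllowedInterchange σ τ) :
    PSpiles (permWord τ) = PSpiles (permWord σ) := by
  obtain ⟨i, j, hi, hj, hij, hbi, hia, hno, rfl⟩ := h
  have hb : ∀ k (hk : k < n), i ≤ k → k < j → σ ⟨j + 1, hj⟩ < σ ⟨k, hk⟩ := by
    intro k hk hik hkj
    rcases hik.eq_or_lt with rfl | hik
    · exact hbi
    · exact lt_of_le_of_ne (not_lt.mp fun h => hno ⟨k, hk, hik, hkj, h⟩)
        (σ.injective.ne (by simp [Fin.ext_iff]; omega))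
  rw [permWord_mul_swap σ hj]
  conv_rhs => rw [permWord_eq_take_append σ hj]
  refine PSpiles_append_cons_cons_comm (i := i) (by simp [permWord]; omega)
    (fun k hk hik => ?_) (by simp [permWord]; exact hia)
  simp only [List.length_take, permWord, List.length_ofFn, lt_min_iff] at hk
  simpa [permWord] using hb k hk.2 hik hk.1
end

section
/- A permutation σ of {1,…,n} is an involution (σ = σ⁻¹) if and only if its insertion and recording piles under Extended Patience Sorting coincide: R(σ) = S(σ). Consequently, Extended Patience Sorting restricts to a bijection between involutions in S_n and those pile configurations R on {1,…,n} for which (R, R) arises as the pair (R(σ), S(σ)) of some permutation σ. -/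
/-- The recording piles `S(w)` of Extended Patience Sorting: the `j`-th recording pile is
the set of (1-based) positions `i` whose value `w(i)` lies in the `j`-th insertion pile,
listed in increasing order from top to bottom (so, like the insertion piles, each
recording pile is stored top-first as an increasing list). -/
def Spiles (w : List ℕ) : List (List ℕ) :=
  (PSpiles w).map fun p =>
    (List.range' 1 w.length).filter (fun i => decide (w.getD (i - 1) 0 ∈ p))

/-!
Label every card by its position, so that patience sorting acts on the points `(i, σ i)` of the
graph of `σ`, each card being inserted according to its value. The first pile then consists of
the left-to-right minima of the word, i.e. the points with no other point south-west of them,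
stacked with the last one on top, and the other piles are the piles of the remaining points.
This description is symmetric under transposing the graph, so the piles of `σ⁻¹` are those of
`σ` with every point transposed and every pile reversed; that is, `S(σ) = R(σ⁻¹)`. The
labelled piles, and hence `σ`, can be read off from `(R(σ), S(σ))`, so `R(σ) = S(σ)` holds
exactly when `σ = σ⁻¹`.
-/

open List

namespace PatienceSorting

theorem filter_mem_eq_of_sublist {α : Type*} [BEq α] [LawfulBEq α] {s l : List α} (hs : s <+ l)
    (hl : l.Nodup) : l.filter (· ∈ s) = s := by
  induction hs with
  | slnil => rfl
  | cons a hs ih =>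
    obtain ⟨ha, hl⟩ := nodup_cons.mp hl
    rw [filter_cons_of_neg (by simpa using fun h => ha (hs.subset h))]
    exact ih hl
  | cons_cons a hs ih =>
    obtain ⟨ha, hl⟩ := nodup_cons.mp hl
    rw [filter_cons_of_pos (by simp)]
    refine congrArg _ ((filter_congr fun b hb => ?_).trans (ih hl))
    simp [show b ≠ a from fun h => ha (h ▸ hb)]

theorem eq_of_map_map_fst_eq_of_map_map_snd_eq {α β : Type*} {P P' : List (List (α × β))}
    (hfst : P.map (map Prod.fst) = P'.map (map Prod.fst))
    (hsnd : P.map (map Prod.snd) = P'.map (map Prod.snd)) : P = P' := by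
  have hunzip : Function.Injective fun q : List (α × β) => (q.map Prod.fst, q.map Prod.snd) :=
    fun q q' h => by simpa [zip_map'] using congrArg (fun p => p.1.zip p.2) h
  apply map_injective_iff.mpr hunzip
  rw [← zip_map', ← zip_map', hfst, hsnd]

theorem eq_of_perm_of_pairwise_fst_lt {l₁ l₂ : List (ℕ × ℕ)} (h : l₁ ~ l₂)
    (h₁ : l₁.Pairwise (·.1 < ·.1)) (h₂ : l₂.Pairwise (·.1 < ·.1)) : l₁ = l₂ :=
  h.eq_of_pairwise (fun _ _ _ _ hab hba => absurd hab (lt_asymm hba)) h₁ h₂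

section Keyed

variable {α : Type*} (key : α → ℕ)

def insertBy (c : α) : List (List α) → List (List α)
  | [] => [[c]]
  | [] :: ps => [] :: insertBy c ps
  | (x :: p) :: ps =>
      if key c < key x then (c :: x :: p) :: ps else (x :: p) :: insertBy c ps

def pilesBy (l : List α) : List (List α) :=
  l.foldl (fun ps c => insertBy key c ps) []

theorem map_map_insertBy (c : α) (ps : List (List α)) :
    (insertBy key c ps).map (map key) = PSinsert (key c) (ps.map (map key)) := by
  fun_induction insertBy key c ps <;> simp_all [PSinsert]

theorem map_map_pilesBy (l : List α) :
    (pilesBy key l).map (map key) = PSpiles (l.map key) := by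
  rw [PSpiles, foldl_map]
  exact (foldl_hom _ fun ps c => (map_map_insertBy key c ps).symm).symm

theorem flatten_insertBy_perm (c : α) (ps : List (List α)) :
    (insertBy key c ps).flatten ~ c :: ps.flatten := by
  fun_induction insertBy key c ps with
  | case1 => simp
  | case2 => simpa [insertBy]
  | case3 => simp [*]
  | case4 x p ps h ih =>
    simpa [*] using (ih.append_left (x :: p)).trans perm_middle

theorem flatten_pilesBy_perm (l : List α) : (pilesBy key l).flatten ~ l := by
  suffices ∀ ps, (l.foldl (fun ps c => insertBy key c ps) ps).flatten ~ ps.flatten ++ l by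
    simpa [pilesBy] using this []
  induction l with
  | nil => simp
  | cons c l ih =>
    intro ps
    exact (ih _).trans (((flatten_insertBy_perm key c ps).append_right l).trans perm_middle.symm)

end Keyed

-- `a` is a left-to-right minimum of the word whose `(position, value)` pairs are `l`.
def IsLTRMin (l : List (ℕ × ℕ)) (a : ℕ × ℕ) : Prop :=
  ∀ b ∈ l, b.1 < a.1 → a.2 < b.2

instance (l : List (ℕ × ℕ)) : DecidablePred (IsLTRMin l) :=
  fun _ => List.decidableBAll _ _

def ltrMins (l : List (ℕ × ℕ)) : List (ℕ × ℕ) := l.filter (IsLTRMin l ·)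

def ltrRest (l : List (ℕ × ℕ)) : List (ℕ × ℕ) := l.filter fun a => !decide (IsLTRMin l a)

theorem isLTRMin_congr {l l' : List (ℕ × ℕ)} (h : l ~ l') {a : ℕ × ℕ} :
    IsLTRMin l a ↔ IsLTRMin l' a := by
  simp only [IsLTRMin, h.mem_iff]

theorem isLTRMin_cons {l : List (ℕ × ℕ)} {a x : ℕ × ℕ} :
    IsLTRMin (x :: l) a ↔ (x.1 < a.1 → a.2 < x.2) ∧ IsLTRMin l a :=
  forall_mem_cons

theorem isLTRMin_cons_iff_of_le {l : List (ℕ × ℕ)} {a b x : ℕ × ℕ} (hb : b ∈ l)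
    (hba : b.1 < a.1) (hbx : b.2 ≤ x.2) : IsLTRMin (x :: l) a ↔ IsLTRMin l a := by
  refine ⟨fun h c hc => h c (mem_cons_of_mem x hc), fun h c hc hca => ?_⟩
  rcases mem_cons.mp hc with rfl | hc
  · exact (h b hb hba).trans_le hbx
  · exact h c hc hca

section Cons

variable {c : ℕ × ℕ} {w : List (ℕ × ℕ)}

theorem isLTRMin_head (hw : (c :: w).Pairwise (·.1 < ·.1)) :
    IsLTRMin (c :: w) c := by
  intro b hb hbc
  rcases mem_cons.mp hb with rfl | hb
  · exact absurd hbc (lt_irrefl _)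
  · exact absurd hbc (rel_of_pairwise_cons hw hb).asymm

theorem ltrMins_cons (hw : (c :: w).Pairwise (·.1 < ·.1)) :
    ltrMins (c :: w) = c :: w.filter (IsLTRMin (c :: w) ·) :=
  filter_cons_of_pos (by simpa using isLTRMin_head hw)

theorem ltrRest_cons (hw : (c :: w).Pairwise (·.1 < ·.1)) :
    ltrRest (c :: w) = w.filter fun a => !decide (IsLTRMin (c :: w) a) :=
  filter_cons_of_neg (by simpa using isLTRMin_head hw)

theorem filter_isLTRMin_congr {l l' w : List (ℕ × ℕ)}
    (h : ∀ a ∈ w, IsLTRMin l a ↔ IsLTRMin l' a) :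
    w.filter (IsLTRMin l ·) = w.filter (IsLTRMin l' ·) ∧
      w.filter (fun a => !decide (IsLTRMin l a)) = w.filter (fun a => !decide (IsLTRMin l' a)) :=
  ⟨filter_congr fun a ha => by simp [h a ha], filter_congr fun a ha => by simp [h a ha]⟩

theorem length_ltrRest_cons_le (hw : (c :: w).Pairwise (·.1 < ·.1)) :
    (ltrRest (c :: w)).length ≤ w.length := by
  rw [ltrRest_cons hw]
  exact length_filter_le _ _

end Cons

/- While the first pile has top `m`, a card joins it exactly when it is a left-to-right minimum
of `m :: w`; the other cards are sorted into the remaining piles as if the first were absent. -/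
theorem foldl_insertBy_snd_cons_cons {m : ℕ × ℕ} {w : List (ℕ × ℕ)}
    (hw : (m :: w).Pairwise (·.1 < ·.1)) (p : List (ℕ × ℕ)) (ps : List (List (ℕ × ℕ))) :
    w.foldl (fun ps c => insertBy Prod.snd c ps) ((m :: p) :: ps) =
      ((w.filter (IsLTRMin (m :: w) ·)).reverse ++ m :: p) ::
        (w.filter fun a => !decide (IsLTRMin (m :: w) a)).foldl
          (fun ps c => insertBy Prod.snd c ps) ps := by
  induction w generalizing m p ps with
  | nil => simp
  | cons c w ih =>
    have hmc : m.1 < c.1 := rel_of_pairwise_cons hw mem_cons_self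
    have hcw : ∀ a ∈ w, c.1 < a.1 := fun a ha => rel_of_pairwise_cons hw.of_cons ha
    by_cases hcm : c.2 < m.2
    · have hc : IsLTRMin (m :: c :: w) c :=
        isLTRMin_cons.mpr ⟨fun _ => hcm, isLTRMin_head hw.of_cons⟩
      have hw' : ∀ a ∈ w, IsLTRMin (m :: c :: w) a ↔ IsLTRMin (c :: w) a := fun a ha =>
        isLTRMin_cons_iff_of_le mem_cons_self (hcw a ha) hcm.le
      rw [foldl_cons, insertBy, if_pos hcm, ih hw.of_cons, filter_cons_of_pos (by simpa using hc),
        filter_cons_of_neg (by simpa using hc), (filter_isLTRMin_congr hw').1,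
        (filter_isLTRMin_congr hw').2]
      simp
    · have hc : ¬ IsLTRMin (m :: c :: w) c := fun h => hcm (h m mem_cons_self hmc)
      have hw' : ∀ a ∈ w, IsLTRMin (m :: c :: w) a ↔ IsLTRMin (m :: w) a := fun a ha =>
        (isLTRMin_congr (Perm.swap c m w)).trans
          (isLTRMin_cons_iff_of_le mem_cons_self (hmc.trans (hcw a ha)) (not_lt.mp hcm))
      rw [foldl_cons, insertBy, if_neg hcm,
        ih (hw.sublist (cons_sublist_cons.mpr (sublist_cons_self c w))),
        filter_cons_of_neg (by simpa using hc), filter_cons_of_pos (by simpa using hc),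
        (filter_isLTRMin_congr hw').1, (filter_isLTRMin_congr hw').2]
      rfl

theorem pilesBy_snd_cons (hw : (c :: w).Pairwise (·.1 < ·.1)) :
    pilesBy Prod.snd (c :: w) =
      (ltrMins (c :: w)).reverse :: pilesBy Prod.snd (ltrRest (c :: w)) := by
  rw [ltrMins_cons hw, ltrRest_cons hw, reverse_cons]
  exact foldl_insertBy_snd_cons_cons hw [] []

theorem reverse_sublist_of_mem_pilesBy_snd {l : List (ℕ × ℕ)} (hl : l.Pairwise (·.1 < ·.1))
    {q : List (ℕ × ℕ)} (hq : q ∈ pilesBy Prod.snd l) : q.reverse <+ l :=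
  match l, hl with
  | [], _ => by simp [pilesBy] at hq
  | c :: w, hl => by
    rw [pilesBy_snd_cons hl, mem_cons] at hq
    rcases hq with rfl | hq
    · rw [reverse_reverse]
      exact filter_sublist
    · exact (reverse_sublist_of_mem_pilesBy_snd (hl.sublist filter_sublist) hq).trans
        filter_sublist
termination_by l.length
decreasing_by exact Nat.lt_succ_of_le (length_ltrRest_cons_le hl)

-- For points with distinct coordinates both sides say that no point of `l` lies south-west of `a`.
theorem isLTRMin_map_swap_iff {l : List (ℕ × ℕ)} (hl : l.Pairwise (·.1 < ·.1))
    (hnd : (l.map Prod.snd).Nodup) {a : ℕ × ℕ} (ha : a ∈ l) :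
    IsLTRMin (l.map Prod.swap) a.swap ↔ IsLTRMin l a := by
  have hfst : ∀ b ∈ l, b.1 = a.1 → b = a := fun b hb =>
    inj_on_of_nodup_map ((pairwise_map.mpr hl).imp ne_of_lt) hb ha
  have hsnd : ∀ b ∈ l, b.2 = a.2 → b = a := fun b hb => inj_on_of_nodup_map hnd hb ha
  simp only [IsLTRMin, forall_mem_map, Prod.fst_swap, Prod.snd_swap]
  refine forall₂_congr fun b hb => ?_
  have := hfst b hb
  have := hsnd b hb
  grind

theorem pairwise_ltrMins {l : List (ℕ × ℕ)} (hl : l.Pairwise (·.1 < ·.1)) :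
    (ltrMins l).Pairwise fun a b => b.2 < a.2 :=
  (hl.filter _).imp_of_mem fun ha hb hab =>
    (by simpa using of_mem_filter hb : IsLTRMin l _) _ (mem_of_mem_filter ha) hab

theorem filter_isLTRMin_perm_map_swap {l l' : List (ℕ × ℕ)} (hl : l.Pairwise (·.1 < ·.1))
    (hnd : (l.map Prod.snd).Nodup) (hperm : l' ~ l.map Prod.swap) (f : Bool → Bool) :
    l'.filter (fun a => f (IsLTRMin l' a)) ~ (l.filter fun a => f (IsLTRMin l a)).map Prod.swap :=
  calc l'.filter (fun a => f (IsLTRMin l' a))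
      ~ (l.map Prod.swap).filter (fun a => f (IsLTRMin l' a)) := hperm.filter _
    _ = (l.filter fun a => f (IsLTRMin l' a.swap)).map Prod.swap := filter_map
    _ = (l.filter fun a => f (IsLTRMin l a)).map Prod.swap :=
      congrArg _ <| filter_congr fun a ha => by
        rw [decide_eq_decide.mpr ((isLTRMin_congr hperm).trans (isLTRMin_map_swap_iff hl hnd ha))]

theorem ltrMins_of_perm_map_swap {l l' : List (ℕ × ℕ)} (hl : l.Pairwise (·.1 < ·.1))
    (hl' : l'.Pairwise (·.1 < ·.1)) (hnd : (l.map Prod.snd).Nodup)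
    (hperm : l' ~ l.map Prod.swap) : ltrMins l' = ((ltrMins l).map Prod.swap).reverse :=
  eq_of_perm_of_pairwise_fst_lt
    ((filter_isLTRMin_perm_map_swap hl hnd hperm id).trans (reverse_perm _).symm) (hl'.filter _)
    (by simpa [pairwise_reverse, pairwise_map] using pairwise_ltrMins hl)

theorem pilesBy_snd_of_perm_map_swap {l l' : List (ℕ × ℕ)} (hl : l.Pairwise (·.1 < ·.1))
    (hl' : l'.Pairwise (·.1 < ·.1)) (hnd : (l.map Prod.snd).Nodup)
    (hperm : l' ~ l.map Prod.swap) :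
    pilesBy Prod.snd l' = (pilesBy Prod.snd l).map fun q => (q.map Prod.swap).reverse :=
  match l, l', hl, hl', hnd, hperm with
  | [], _, _, _, _, hperm => by
    rw [perm_nil.mp hperm]
    rfl
  | _ :: _, [], _, _, _, hperm => absurd hperm.length_eq (by simp)
  | c :: w, c' :: w', hl, hl', hnd, hperm => by
    have hrest : ltrRest (c' :: w') ~ (ltrRest (c :: w)).map Prod.swap :=
      filter_isLTRMin_perm_map_swap hl hnd hperm not
    rw [pilesBy_snd_cons hl, pilesBy_snd_cons hl', map_cons,
      ltrMins_of_perm_map_swap hl hl' hnd hperm,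
      pilesBy_snd_of_perm_map_swap (l := ltrRest (c :: w)) (l' := ltrRest (c' :: w'))
        (hl.filter _) (hl'.filter _) (hnd.sublist (filter_sublist.map _)) hrest]
    simp [map_reverse]
termination_by l.length
decreasing_by exact Nat.lt_succ_of_le (length_ltrRest_cons_le hl)

def wordGraph (w : List ℕ) : List (ℕ × ℕ) := (range' 1 w.length).zip w

theorem map_fst_wordGraph (w : List ℕ) : (wordGraph w).map Prod.fst = range' 1 w.length :=
  map_fst_zip (by simp)

theorem map_snd_wordGraph (w : List ℕ) : (wordGraph w).map Prod.snd = w :=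
  map_snd_zip (by simp)

theorem pairwise_wordGraph (w : List ℕ) : (wordGraph w).Pairwise (·.1 < ·.1) :=
  pairwise_map.mp (by rw [map_fst_wordGraph]; exact pairwise_lt_range')

theorem getD_of_mem_wordGraph {w : List ℕ} {a : ℕ × ℕ} (ha : a ∈ wordGraph w) :
    w.getD (a.1 - 1) 0 = a.2 := by
  obtain ⟨k, hk, rfl⟩ := getElem_of_mem ha
  have hkw : k < w.length := by simpa [wordGraph] using hk
  simp [wordGraph, hkw]

theorem PSpiles_eq_map_pilesBy (w : List ℕ) :
    PSpiles w = (pilesBy Prod.snd (wordGraph w)).map (map Prod.snd) := by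
  rw [map_map_pilesBy, map_snd_wordGraph]

theorem Spiles_eq_map_pilesBy {w : List ℕ} (hw : w.Nodup) :
    Spiles w = (pilesBy Prod.snd (wordGraph w)).map fun q => (q.map Prod.fst).reverse := by
  rw [Spiles, PSpiles_eq_map_pilesBy, map_map]
  refine map_congr_left fun q hq => ?_
  have hsub : q.reverse <+ wordGraph w :=
    reverse_sublist_of_mem_pilesBy_snd (pairwise_wordGraph w) hq
  have hval : ∀ a ∈ wordGraph w, a.2 ∈ q.map Prod.snd ↔ a ∈ q := fun a ha =>
    ⟨fun h => by
      obtain ⟨b, hb, hba⟩ := mem_map.mp h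
      have hbw : b ∈ wordGraph w := hsub.subset (mem_reverse.mpr hb)
      rwa [inj_on_of_nodup_map ((map_snd_wordGraph w).symm ▸ hw) hbw ha hba] at hb,
     mem_map_of_mem⟩
  calc (range' 1 w.length).filter (fun i => w.getD (i - 1) 0 ∈ q.map Prod.snd)
      = ((wordGraph w).filter (· ∈ q.reverse)).map Prod.fst := by
        rw [← map_fst_wordGraph, filter_map]
        exact congrArg _ (filter_congr fun a ha => by
          simp only [Function.comp_apply, getD_of_mem_wordGraph ha, hval a ha, mem_reverse])
    _ = (q.map Prod.fst).reverse := by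
        have hnd : (wordGraph w).Nodup :=
          (pairwise_wordGraph w).imp fun h hab => h.ne (congrArg Prod.fst hab)
        rw [filter_mem_eq_of_sublist hsub hnd, map_reverse]

theorem Spiles_eq_PSpiles_of_perm {w w' : List ℕ} (hw : w.Nodup)
    (h : wordGraph w' ~ (wordGraph w).map Prod.swap) : Spiles w = PSpiles w' := by
  rw [Spiles_eq_map_pilesBy hw, PSpiles_eq_map_pilesBy,
    pilesBy_snd_of_perm_map_swap (pairwise_wordGraph w) (pairwise_wordGraph w')
      (by rwa [map_snd_wordGraph]) h, map_map]
  simp [Function.comp_def, map_reverse]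

theorem eq_of_PSpiles_eq_of_Spiles_eq {w w' : List ℕ} (hw : w.Nodup) (hw' : w'.Nodup)
    (hR : PSpiles w = PSpiles w') (hS : Spiles w = Spiles w') : w = w' := by
  rw [PSpiles_eq_map_pilesBy, PSpiles_eq_map_pilesBy] at hR
  rw [Spiles_eq_map_pilesBy hw, Spiles_eq_map_pilesBy hw'] at hS
  have hP : pilesBy Prod.snd (wordGraph w) = pilesBy Prod.snd (wordGraph w') := by
    refine eq_of_map_map_fst_eq_of_map_map_snd_eq ?_ hR
    simpa [Function.comp_def] using congrArg (map reverse) hS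
  have hG : wordGraph w = wordGraph w' :=
    eq_of_perm_of_pairwise_fst_lt
      ((flatten_pilesBy_perm _ _).symm.trans (hP ▸ flatten_pilesBy_perm Prod.snd (wordGraph w')))
      (pairwise_wordGraph w) (pairwise_wordGraph w')
  rw [← map_snd_wordGraph w, hG, map_snd_wordGraph]

section Permutations

variable {n : ℕ}

theorem nodup_permWord (σ : Equiv.Perm (Fin n)) : (permWord σ).Nodup :=
  nodup_ofFn.mpr fun i j h => σ.injective (Fin.ext (by simpa using h))

theorem permWord_injective : Function.Injective (permWord (n := n)) := fun σ τ h =>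
  Equiv.ext fun i => Fin.ext (by simpa using congrFun (ofFn_injective h) i)

theorem wordGraph_permWord (σ : Equiv.Perm (Fin n)) :
    wordGraph (permWord σ) = ofFn fun i => ((i : ℕ) + 1, (σ i : ℕ) + 1) := by
  refine ext_getElem (by simp [wordGraph, permWord]) fun k h₁ h₂ => ?_
  simp [wordGraph, permWord]
  omega

theorem wordGraph_permWord_inv_perm (σ : Equiv.Perm (Fin n)) :
    wordGraph (permWord σ⁻¹) ~ (wordGraph (permWord σ)).map Prod.swap := by
  rw [wordGraph_permWord, wordGraph_permWord, map_ofFn]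
  simpa [Function.comp_def] using
    (σ.ofFn_comp_perm fun j => ((j : ℕ) + 1, (σ⁻¹ j : ℕ) + 1)).symm

theorem Spiles_permWord (σ : Equiv.Perm (Fin n)) :
    Spiles (permWord σ) = PSpiles (permWord σ⁻¹) :=
  Spiles_eq_PSpiles_of_perm (nodup_permWord σ) (wordGraph_permWord_inv_perm σ)

theorem eq_of_PSpiles_permWord_eq_of_Spiles_permWord_eq {σ τ : Equiv.Perm (Fin n)}
    (hR : PSpiles (permWord σ) = PSpiles (permWord τ))
    (hS : Spiles (permWord σ) = Spiles (permWord τ)) : σ = τ :=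
  permWord_injective (eq_of_PSpiles_eq_of_Spiles_eq (nodup_permWord σ) (nodup_permWord τ) hR hS)

theorem inv_eq_self_iff_PSpiles_eq_Spiles (σ : Equiv.Perm (Fin n)) :
    σ⁻¹ = σ ↔ PSpiles (permWord σ) = Spiles (permWord σ) := by
  rw [Spiles_permWord]
  refine ⟨fun h => by rw [h], fun h => ?_⟩
  refine eq_of_PSpiles_permWord_eq_of_Spiles_permWord_eq h.symm ?_
  rw [Spiles_permWord, Spiles_permWord, inv_inv, h]

end Permutations

end PatienceSorting

open PatienceSorting

/-- A permutation `σ` is an involution (`σ = σ⁻¹`) if and only if its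
insertion and recording piles under Extended Patience Sorting coincide, `R(σ) = S(σ)`;
consequently `σ ↦ R(σ)` is a bijection from the involutions in `S_n` onto the pile
configurations `R` for which `(R, R)` arises as `(R(σ), S(σ))` for some permutation `σ`. -/
theorem stmt10 (n : ℕ) :
    (∀ σ : Equiv.Perm (Fin n),
      σ⁻¹ = σ ↔ PSpiles (permWord σ) = Spiles (permWord σ)) ∧
    Set.BijOn (fun σ : Equiv.Perm (Fin n) => PSpiles (permWord σ))
      {σ | σ⁻¹ = σ}
      {R | ∃ σ : Equiv.Perm (Fin n),
        PSpiles (permWord σ) = R ∧ Spiles (permWord σ) = R} := by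
  have hinv := inv_eq_self_iff_PSpiles_eq_Spiles (n := n)
  refine ⟨hinv, fun σ hσ => ⟨σ, rfl, ((hinv σ).mp hσ).symm⟩, fun σ hσ τ hτ hR => ?_, ?_⟩
  · refine eq_of_PSpiles_permWord_eq_of_Spiles_permWord_eq hR ?_
    rwa [← (hinv σ).mp hσ, ← (hinv τ).mp hτ]
  · rintro R ⟨σ, hR, hS⟩
    exact ⟨σ, (hinv σ).mpr (hR.trans hS.symm), hR⟩
end

section
/- For every permutation σ of {1,…,n} and every position m ∈ {1,…,n}, one has σ(RPW(S'(σ))(m)) = RPW(R(σ))(m); that is, σ is given in two-line notation by top row RPW(S'(σ)) and bottom row RPW(R(σ)). -/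
/-- The reverse patience word of a pile configuration: concatenate the piles
left to right, each pile written in decreasing order (bottom to top). -/
def RPW (P : List (List ℕ)) : List ℕ := (P.map List.reverse).flatten

/-!
A card is always put on top of a pile, so the cards of a pile occur in the word `w` in the
order bottom-to-top: filtering `w` to a pile `p` gives `p.reverse`. The recording pile of `p`
lists the positions of these cards in increasing order, so reading `w` at those positions
also gives `p.reverse`, which is the contribution of `p` to `RPW (PSpiles w)`.
-/

section FilterMem

variable {α : Type*} [DecidableEq α] {w p : List α} {c : α}

theorem subset_of_filter_mem_eq_reverse (h : w.filter (· ∈ p) = p.reverse) : p ⊆ w :=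
  fun _ hx => (List.mem_filter.mp (h ▸ List.mem_reverse.mpr hx)).1

theorem filter_mem_append_singleton_of_not_mem (hc : c ∉ w)
    (h : w.filter (· ∈ p) = p.reverse) : (w ++ [c]).filter (· ∈ p) = p.reverse := by
  have hcp : c ∉ p := fun hcp => hc (subset_of_filter_mem_eq_reverse h hcp)
  simp [List.filter_append, h, hcp]

theorem filter_mem_cons_append_singleton (hc : c ∉ w)
    (h : w.filter (· ∈ p) = p.reverse) : (w ++ [c]).filter (· ∈ c :: p) = (c :: p).reverse := by
  have hw : w.filter (· ∈ c :: p) = w.filter (· ∈ p) :=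
    List.filter_congr fun x hx => by
      have hxc : x ≠ c := fun hxc => hc (hxc ▸ hx)
      simp [hxc]
  rw [List.filter_append, hw, h]
  simp

end FilterMem

theorem filter_mem_PSinsert_eq_reverse {w : List ℕ} {c : ℕ} (hc : c ∉ w) (ps : List (List ℕ))
    (hps : ∀ p ∈ ps, w.filter (· ∈ p) = p.reverse) :
    ∀ p ∈ PSinsert c ps, (w ++ [c]).filter (· ∈ p) = p.reverse := by
  induction ps with
  | nil =>
    intro p hp
    obtain rfl : p = [c] := List.mem_singleton.mp hp
    exact filter_mem_cons_append_singleton hc (by simp)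
  | cons q ps ih =>
    have ih' := ih fun p hp => hps p (List.mem_cons_of_mem q hp)
    have hq := hps q List.mem_cons_self
    match q with
    | [] => simpa [PSinsert] using ih'
    | x :: q =>
      by_cases hcx : c < x
      · simp only [PSinsert, if_pos hcx, List.forall_mem_cons]
        exact ⟨filter_mem_cons_append_singleton hc hq, fun p hp =>
          filter_mem_append_singleton_of_not_mem hc (hps p (List.mem_cons_of_mem _ hp))⟩
      · simp only [PSinsert, if_neg hcx, List.forall_mem_cons]
        exact ⟨filter_mem_append_singleton_of_not_mem hc hq, ih'⟩

theorem filter_mem_PSpiles_eq_reverse {w : List ℕ} (hw : w.Nodup) :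
    ∀ p ∈ PSpiles w, w.filter (· ∈ p) = p.reverse := by
  induction w using List.reverseRecOn with
  | nil => simp [PSpiles]
  | append_singleton w c ih =>
    have hc : c ∉ w := fun hcw => (List.nodup_append.mp hw).2.2 c hcw c (by simp) rfl
    have hinsert : PSpiles (w ++ [c]) = PSinsert c (PSpiles w) := by
      simp [PSpiles, List.foldl_append]
    rw [hinsert]
    exact filter_mem_PSinsert_eq_reverse hc _ (ih hw.of_append_left)

theorem map_getD_pred_range'_one (w : List ℕ) :
    (List.range' 1 w.length).map (fun i => w.getD (i - 1) 0) = w := by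
  refine List.ext_getElem (by simp) fun i _ hi => ?_
  simp only [List.getElem_map, List.getElem_range']
  rw [List.getD_eq_getElem _ _ (by simpa using hi)]
  congr 1
  omega

theorem map_getD_Spiles {w : List ℕ} (hw : w.Nodup) :
    (Spiles w).map (List.map fun i => w.getD (i - 1) 0) = (PSpiles w).map List.reverse := by
  rw [Spiles, List.map_map]
  refine List.map_congr_left fun p hp => ?_
  have hfilter := List.filter_map (f := fun i => w.getD (i - 1) 0) (p := (· ∈ p))
    (l := List.range' 1 w.length)
  rw [map_getD_pred_range'_one] at hfilter
  rw [Function.comp_apply, ← filter_mem_PSpiles_eq_reverse hw p hp, hfilter]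
  rfl

/-- For every permutation `σ` of `{1,…,n}`, applying `σ` entrywise to the
word `RPW(S'(σ))` (the concatenation of the recording piles, each written in increasing
order) yields the word `RPW(R(σ))`; i.e., `σ(RPW(S'(σ))(m)) = RPW(R(σ))(m)` for every
position `m`, so `σ` has two-line notation with top row `RPW(S'(σ))` and bottom row
`RPW(R(σ))`. -/
theorem stmt11 (n : ℕ) (σ : Equiv.Perm (Fin n)) :
    ((Spiles (permWord σ)).flatten).map (fun i => (permWord σ).getD (i - 1) 0)
      = RPW (PSpiles (permWord σ)) := by
  rw [List.map_flatten, map_getD_Spiles (permWord_nodup σ), RPW]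
end

section
/- For every permutation σ of {1,…,n}, the pair (R(σ), S(σ)) produced by Extended Patience Sorting is a stable pair: R(σ) and S(σ) have the same shape, and there are no positions (i, j) with i+1 < j at which the pair of words (RPW(R(σ)), RPW(S'(σ))) has a simultaneous occurrence of the pattern pairs (31-2, 13-2), (31-2, 32-1), or (32-1, 13-2). -/
/-- Occurrence of the pattern 31-2 in the word `w` at (0-based) positions `(i, j)`:
`w(i+1) < w(j) < w(i)`. -/
def Occ31_2 (w : List ℕ) (i j : ℕ) : Prop :=
  w.getD (i + 1) 0 < w.getD j 0 ∧ w.getD j 0 < w.getD i 0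

/-- Occurrence of the pattern 13-2 in the word `w` at positions `(i, j)`:
`w(i) < w(j) < w(i+1)`. -/
def Occ13_2 (w : List ℕ) (i j : ℕ) : Prop :=
  w.getD i 0 < w.getD j 0 ∧ w.getD j 0 < w.getD (i + 1) 0

/-- Occurrence of the pattern 32-1 in the word `w` at positions `(i, j)`:
`w(j) < w(i+1) < w(i)`. -/
def Occ32_1 (w : List ℕ) (i j : ℕ) : Prop :=
  w.getD j 0 < w.getD (i + 1) 0 ∧ w.getD (i + 1) 0 < w.getD i 0

/-- A simultaneous occurrence, at common positions `(i, j)` with `i + 1 < j`, in the pair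
of words `(u, v)` of one of the forbidden pattern pairs `(31-2, 13-2)`, `(31-2, 32-1)`,
`(32-1, 13-2)`. -/
def SimOcc (u v : List ℕ) : Prop :=
  ∃ i j : ℕ, i + 1 < j ∧ j < u.length ∧
    ((Occ31_2 u i j ∧ Occ13_2 v i j) ∨ (Occ31_2 u i j ∧ Occ32_1 v i j) ∨
      (Occ32_1 u i j ∧ Occ13_2 v i j))

/-!
Let `f` be the arrival time of a card (its position in the word plus one); the recording word
`RPW(S'(σ))` is then just `RPW(R(σ))` read through `f`, which also gives the equality of shapes.
Along `RPW(R(σ))`, two adjacent letters from different piles increase, because the top of a pile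
is smaller than every card of the piles to its right. Two adjacent letters `b > t` from the same
pile mean that `t` was put directly on `b`, so `f b < f t` and `b` was the top of its pile during
the whole interval `(f b, f t)`; a card `c` arriving in that interval and sent to a pile further
right passed over `b`, so `c > b`. Every forbidden pair needs a descent `b > t` at positions
`i, i + 1` and then either `f t < f b`, or a later letter `c < b` with `f b < f c < f t`.
-/

namespace PatienceSorting

def StableWord (f : ℕ → ℕ) : List ℕ → Prop
  | a :: b :: rest =>
      (a < b ∨ (b < a ∧ f a < f b ∧ ∀ c ∈ rest, f a < f c → f c < f b → a < c)) ∧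
        StableWord f (b :: rest)
  | _ => True

theorem stableWord_of_pairwise {f : ℕ → ℕ} :
    ∀ {l : List ℕ}, l.Pairwise (fun a b => b < a ∧ f a < f b) → StableWord f l
  | [], _ | [_], _ => trivial
  | a :: b :: rest, h => by
    obtain ⟨hab, hrest⟩ := List.pairwise_cons.1 h
    obtain ⟨hba, hfab⟩ := hab b (by simp)
    refine ⟨Or.inr ⟨hba, hfab, fun c hc _ hcb => ?_⟩, stableWord_of_pairwise hrest⟩
    have := ((List.pairwise_cons.1 hrest).1 c hc).2
    omega

theorem StableWord.append {f : ℕ → ℕ} :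
    ∀ {l u : List ℕ}, StableWord f l → StableWord f u →
      (∀ a ∈ l.getLast?, ∀ b ∈ u.head?, a < b) →
      (∀ a b, [a, b] <:+: l → ∀ c ∈ u, f a < f c → f c < f b → a < c) →
      StableWord f (l ++ u)
  | [], _, _, hu, _, _ => hu
  | [_], [], _, _, _, _ => trivial
  | [a], b :: _, _, hu, hlast, _ => ⟨Or.inl (hlast a rfl b rfl), hu⟩
  | a :: b :: l, u, ⟨hab, hl⟩, hu, hlast, hcross => by
    refine ⟨?_, StableWord.append hl hu (by simpa using hlast)
      fun x y hxy => hcross x y (List.infix_cons hxy)⟩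
    rcases hab with hab | ⟨hba, hfab, hrest⟩
    · exact Or.inl hab
    refine Or.inr ⟨hba, hfab, fun c hc => ?_⟩
    rcases List.mem_append.1 hc with hc | hc
    · exact hrest c hc
    · exact hcross a b (List.prefix_append [a, b] l).isInfix c hc

theorem StableWord.getElem {f : ℕ → ℕ} :
    ∀ {u : List ℕ}, StableWord f u → ∀ {i j : ℕ} (hij : i + 1 < j) (hj : j < u.length),
      u[i] < u[i + 1] ∨ (u[i + 1] < u[i] ∧ f u[i] < f u[i + 1] ∧
        (f u[i] < f u[j] → f u[j] < f u[i + 1] → u[i] < u[j]))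
  | a :: b :: rest, ⟨hab, _⟩, 0, j + 2, _, hj => by
    simp only [List.getElem_cons_zero, List.getElem_cons_succ]
    rcases hab with hab | ⟨hba, hfab, hrest⟩
    · exact Or.inl hab
    · exact Or.inr ⟨hba, hfab, hrest _ (List.getElem_mem _)⟩
  | [_], _, _, _, hij, hj => by simp at hj; omega
  | _ :: b :: rest, ⟨_, htail⟩, i + 1, j + 1, hij, hj =>
    StableWord.getElem (u := b :: rest) htail (by omega) (by simpa using hj)

theorem StableWord.not_simOcc {f : ℕ → ℕ} {u : List ℕ} (h : StableWord f u) :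
    ¬ SimOcc u (u.map f) := by
  rintro ⟨i, j, hij, hj, hpat⟩
  have key := h.getElem hij hj
  simp only [Occ31_2, Occ13_2, Occ32_1, List.getD_eq_getElem?_getD, List.getElem?_map,
    List.getElem?_eq_getElem (by omega : i < u.length),
    List.getElem?_eq_getElem (by omega : i + 1 < u.length), List.getElem?_eq_getElem hj,
    Option.map_some, Option.getD_some] at hpat
  omega

theorem mem_PSinsert {c : ℕ} {q : List ℕ} :
    ∀ {P : List (List ℕ)}, q ∈ PSinsert c P → q = [c] ∨ q ∈ P ∨ ∃ q' ∈ P, q = c :: q'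
  | [], h => Or.inl (by simpa [PSinsert] using h)
  | [] :: ps, h => by
    rcases List.mem_cons.1 h with rfl | h
    · exact Or.inr (Or.inl (by simp))
    · rcases mem_PSinsert h with h | h | ⟨q', hq', h⟩
      · exact Or.inl h
      · exact Or.inr (Or.inl (by simp [h]))
      · exact Or.inr (Or.inr ⟨q', by simp [hq'], h⟩)
  | (x :: p) :: ps, h => by
    unfold PSinsert at h
    split_ifs at h
    · rcases List.mem_cons.1 h with rfl | h
      · exact Or.inr (Or.inr ⟨x :: p, by simp, rfl⟩)
      · exact Or.inr (Or.inl (by simp [h]))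
    · rcases List.mem_cons.1 h with rfl | h
      · exact Or.inr (Or.inl (by simp))
      · rcases mem_PSinsert h with h | h | ⟨q', hq', h⟩
        · exact Or.inl h
        · exact Or.inr (Or.inl (by simp [h]))
        · exact Or.inr (Or.inr ⟨q', by simp [hq'], h⟩)

theorem flatten_PSinsert_perm (c : ℕ) :
    ∀ P : List (List ℕ), (PSinsert c P).flatten.Perm (c :: P.flatten)
  | [] => by simp [PSinsert]
  | [] :: ps => by simpa [PSinsert] using flatten_PSinsert_perm c ps
  | (x :: p) :: ps => by
    unfold PSinsert
    split_ifs
    · simp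
    · simpa using ((flatten_PSinsert_perm c ps).append_left (x :: p)).trans List.perm_middle

theorem PSpiles_append_singleton (w : List ℕ) (c : ℕ) :
    PSpiles (w ++ [c]) = PSinsert c (PSpiles w) := by
  simp [PSpiles]

theorem flatten_PSpiles_perm (w : List ℕ) : (PSpiles w).flatten.Perm w := by
  induction w using List.reverseRecOn with
  | nil => simp [PSpiles]
  | append_singleton w c ih =>
    rw [PSpiles_append_singleton]
    exact (flatten_PSinsert_perm c _).trans
      ((ih.cons c).trans (List.perm_append_singleton c w).symm)

theorem mem_of_mem_PSpiles {w p : List ℕ} {x : ℕ} (hp : p ∈ PSpiles w) (hx : x ∈ p) : x ∈ w :=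
  (flatten_PSpiles_perm w).subset (List.mem_flatten.2 ⟨p, hp, hx⟩)

/-- `f` records arrival times. Pile `p` lies left of pile `q`: every card of `q` exceeds the
top of `p`, and a card `y` of `q` that arrived while `b` was on top of `p` (after `b`, before
the card `t` later put on `b`) exceeds `b`. -/
def PileRel (f : ℕ → ℕ) (p q : List ℕ) : Prop :=
  (∀ x ∈ p.head?, ∀ y ∈ q, x < y) ∧
    ∀ t b, [t, b] <:+: p → ∀ y ∈ q, f b < f y → f y < f t → b < y

theorem pileRel_nil_left (f : ℕ → ℕ) (q : List ℕ) : PileRel f [] q :=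
  ⟨by simp, fun _ _ h => absurd h.length_le (by simp)⟩

theorem pileRel_nil_right (f : ℕ → ℕ) (p : List ℕ) : PileRel f p [] :=
  ⟨by simp, by simp⟩

theorem PileRel.cons_left {f : ℕ → ℕ} {x c : ℕ} {p q : List ℕ} (h : PileRel f (x :: p) q)
    (hcx : c < x) (hq : ∀ y ∈ q, f y < f c) : PileRel f (c :: x :: p) q := by
  refine ⟨fun a ha y hy => ?_, fun t b htb y hy hby hyt => ?_⟩
  · cases ha
    exact hcx.trans (h.1 x rfl y hy)
  · rcases List.infix_cons_iff.1 htb with htb | htb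
    · obtain ⟨rfl, rfl⟩ : t = c ∧ b = x := by simpa using htb
      exact h.1 b rfl y hy
    · exact h.2 t b htb y hy hby hyt

theorem PileRel.cons_right {f : ℕ → ℕ} {c : ℕ} {p q : List ℕ} (h : PileRel f p q)
    (hp : ∀ x ∈ p.head?, x < c) (hpc : ∀ t ∈ p, f t < f c) : PileRel f p (c :: q) := by
  refine ⟨fun x hx y hy => ?_, fun t b htb y hy hby hyt => ?_⟩
  · rcases List.mem_cons.1 hy with rfl | hy
    · exact hp x hx
    · exact h.1 x hx y hy
  · rcases List.mem_cons.1 hy with rfl | hy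
    · exact absurd (hpc t (htb.subset (by simp))) (by omega)
    · exact h.2 t b htb y hy hby hyt

def GoodPiles (f : ℕ → ℕ) (P : List (List ℕ)) : Prop :=
  (∀ p ∈ P, p.Pairwise fun x y => x < y ∧ f y < f x) ∧ P.Pairwise (PileRel f)

theorem goodPiles_PSinsert {f : ℕ → ℕ} {c : ℕ} :
    ∀ {P : List (List ℕ)}, GoodPiles f P → (∀ p ∈ P, ∀ x ∈ p, f x < f c) →
      GoodPiles f (PSinsert c P)
  | [], _, _ => ⟨by simp [PSinsert], by simp [PSinsert]⟩
  | [] :: ps, ⟨hinc, hrel⟩, hc => by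
    obtain ⟨hinc', hrel'⟩ := goodPiles_PSinsert (P := ps)
      ⟨fun p hp => hinc p (by simp [hp]), (List.pairwise_cons.1 hrel).2⟩
      fun p hp => hc p (by simp [hp])
    show GoodPiles f ([] :: PSinsert c ps)
    refine ⟨?_, List.pairwise_cons.2 ⟨fun q _ => pileRel_nil_left f q, hrel'⟩⟩
    simpa using hinc'
  | (x :: p) :: ps, ⟨hinc, hrel⟩, hc => by
    obtain ⟨hxp, hps⟩ := List.pairwise_cons.1 hrel
    have hpile := hinc (x :: p) (by simp)
    have hfc := hc (x :: p) (by simp)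
    unfold PSinsert
    split_ifs with hcx
    · refine ⟨fun q hq => ?_, List.pairwise_cons.2
        ⟨fun q hq => (hxp q hq).cons_left hcx (hc q (by simp [hq])), hps⟩⟩
      rcases List.mem_cons.1 hq with rfl | hq
      · refine List.pairwise_cons.2 ⟨fun y hy => ⟨?_, hfc y hy⟩, hpile⟩
        rcases List.mem_cons.1 hy with rfl | hy
        · exact hcx
        · exact hcx.trans ((List.pairwise_cons.1 hpile).1 y hy).1
      · exact hinc q (by simp [hq])
    · have hxc : x < c := lt_of_le_of_ne (not_lt.1 hcx) fun h => (hfc x (by simp)).ne (by rw [h])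
      obtain ⟨hinc', hrel'⟩ := goodPiles_PSinsert (P := ps)
        ⟨fun p hp => hinc p (by simp [hp]), hps⟩ fun p hp => hc p (by simp [hp])
      refine ⟨?_, List.pairwise_cons.2 ⟨fun q hq => ?_, hrel'⟩⟩
      · simpa [hpile] using hinc'
      have hhead : ∀ y ∈ (x :: p).head?, y < c := by simpa using hxc
      rcases mem_PSinsert hq with rfl | hq | ⟨q', hq', rfl⟩
      · exact (pileRel_nil_right f _).cons_right hhead hfc
      · exact hxp q hq
      · exact (hxp q' hq').cons_right hhead hfc

theorem goodPiles_PSpiles {f : ℕ → ℕ} {w : List ℕ} (hw : w.Pairwise (f · < f ·)) :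
    GoodPiles f (PSpiles w) := by
  induction w using List.reverseRecOn with
  | nil => simp [PSpiles, GoodPiles]
  | append_singleton w c ih =>
    obtain ⟨hw, -, hwc⟩ := List.pairwise_append.1 hw
    rw [PSpiles_append_singleton]
    exact goodPiles_PSinsert (ih hw) fun p hp x hx => hwc x (mem_of_mem_PSpiles hp hx) c (by simp)

theorem stableWord_RPW {f : ℕ → ℕ} :
    ∀ {P : List (List ℕ)}, GoodPiles f P → StableWord f (RPW P)
  | [], _ => trivial
  | p :: P, ⟨hinc, hrel⟩ => by
    obtain ⟨hp, hP⟩ := List.pairwise_cons.1 hrel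
    have hmem : ∀ y ∈ RPW P, ∃ q ∈ P, y ∈ q := by
      simp only [RPW, List.mem_flatten, List.mem_map]
      rintro y ⟨_, ⟨q, hq, rfl⟩, hy⟩
      exact ⟨q, hq, List.mem_reverse.1 hy⟩
    refine StableWord.append (l := p.reverse) (stableWord_of_pairwise ?_)
      (stableWord_RPW ⟨fun q hq => hinc q (by simp [hq]), hP⟩) (fun a ha b hb => ?_)
      (fun a b hab c hc => ?_)
    · exact List.pairwise_reverse.2 (hinc p (by simp))
    · obtain ⟨q, hq, hbq⟩ := hmem b (List.mem_of_mem_head? hb)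
      exact (hp q hq).1 a (by simpa using ha) b hbq
    · obtain ⟨q, hq, hcq⟩ := hmem c hc
      exact (hp q hq).2 b a ((List.reverse_infix (l₁ := [b, a]) (l₂ := p)).1 hab) c hcq

theorem pairwise_idxOf_lt {w : List ℕ} (hw : w.Nodup) : w.Pairwise (w.idxOf · < w.idxOf ·) :=
  List.pairwise_iff_getElem.2 fun i j hi hj hij => by
    rwa [hw.idxOf_getElem, hw.idxOf_getElem]

theorem Spiles_eq {w : List ℕ} (hw : w.Nodup)
    (h : ∀ p ∈ PSpiles w, p.Pairwise fun x y => w.idxOf y < w.idxOf x) :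
    Spiles w = (PSpiles w).map fun p => p.reverse.map (w.idxOf · + 1) := by
  refine List.map_congr_left fun p hp => List.Pairwise.eq_of_mem_iff (r := (· < ·))
    ((List.pairwise_lt_range' ..).filter _) ?_ fun i => ?_
  · exact List.pairwise_map.2 (List.pairwise_reverse.2 ((h p hp).imp fun hxy => by omega))
  simp only [List.mem_filter, List.mem_range'_1, List.mem_map, List.mem_reverse,
    decide_eq_true_eq]
  constructor
  · rintro ⟨⟨hi₁, hi₂⟩, hmem⟩
    rw [List.getD_eq_getElem _ _ (by omega)] at hmem
    exact ⟨_, hmem, by rw [hw.idxOf_getElem]; omega⟩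
  · rintro ⟨x, hx, rfl⟩
    have hidx : w.idxOf x < w.length := List.idxOf_lt_length_iff.2 (mem_of_mem_PSpiles hp hx)
    refine ⟨⟨by omega, by omega⟩, ?_⟩
    rwa [Nat.add_sub_cancel, List.getD_eq_getElem _ _ hidx, List.getElem_idxOf hidx]

end PatienceSorting

open PatienceSorting

/-- For every permutation `σ` of `{1,…,n}`, the pair `(R(σ), S(σ))`
produced by Extended Patience Sorting is a stable pair: `R(σ)` and `S(σ)` have the same
shape, and the pair of words `(RPW(R(σ)), RPW(S'(σ)))` has no simultaneous occurrence
of `(31-2, 13-2)`, `(31-2, 32-1)`, or `(32-1, 13-2)` at common positions `(i, j)` with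
`i + 1 < j`.  (Here `RPW(S'(σ))` is the concatenation of the recording piles, each
written in increasing order, i.e. `(Spiles w).flatten`.) -/
theorem stmt12 (n : ℕ) (σ : Equiv.Perm (Fin n)) :
    (PSpiles (permWord σ)).map List.length = (Spiles (permWord σ)).map List.length ∧
    ¬ SimOcc (RPW (PSpiles (permWord σ))) ((Spiles (permWord σ)).flatten) := by
  set w := permWord σ
  have hw : w.Nodup := List.nodup_ofFn.2 fun i j h => σ.injective (Fin.ext (by simpa using h))
  have hgood : GoodPiles (w.idxOf · + 1) (PSpiles w) :=
    goodPiles_PSpiles ((pairwise_idxOf_lt hw).imp (by omega))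
  have hS := Spiles_eq hw fun p hp => (hgood.1 p hp).imp fun hxy => Nat.succ_lt_succ_iff.1 hxy.2
  have hword : (Spiles w).flatten = (RPW (PSpiles w)).map (w.idxOf · + 1) := by
    simp only [hS, RPW, List.map_flatten, List.map_map]
    rfl
  refine ⟨by simp [hS], ?_⟩
  rw [hword]
  exact (stableWord_RPW hgood).not_simOcc
end

section
/- The set S_n(3-1̄-42) of permutations of {1,…,n} avoiding the barred pattern 3-1̄-42 is exactly the set of reverse patience words of pile configurations of permutations: S_n(3-1̄-42) = {RPW(R(σ)) : σ ∈ S_n}; equivalently, a permutation σ avoids 3-1̄-42 if and only if σ = RPW(R(σ)). -/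
/-- `AvoidsBarred σ`: the permutation avoids the barred pattern 3-1̄-42, i.e., every
occurrence of 2-31 (0-based positions `i < j` with `w(j+1) < w(i) < w(j)`, where `w` is
the one-line word of `σ`) is contained in an occurrence of 3-1-42 (there is `k` with
`i < k < j` and `w(k) < w(j+1)`). -/
def AvoidsBarred {n : ℕ} (σ : Equiv.Perm (Fin n)) : Prop :=
  ∀ i j : ℕ, i < j → j + 1 < n →
    (permWord σ).getD (j + 1) 0 < (permWord σ).getD i 0 →
    (permWord σ).getD i 0 < (permWord σ).getD j 0 →
    ∃ k, i < k ∧ k < j ∧ (permWord σ).getD k 0 < (permWord σ).getD (j + 1) 0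

/-!
Patience sorting keeps each pile increasing from top to bottom and every card of a later pile
above the tops of all earlier piles. Hence `RPW (R σ)` is a concatenation of decreasing runs, each
ending in a letter smaller than everything after it, and such a word avoids 3-1̄-42: in a 2-31
occurrence `x … y z` the descent `y z` lies in one run and `x` in an earlier one, whose last letter
lies between `x` and `y` and is below `z`.

Conversely, let `m` be the last letter of the first maximal decreasing run of a word avoiding
3-1̄-42. If a later letter were below `m`, the first such letter `z` would follow some `y > m`, and
the occurrence `m … y z` of 2-31 would not extend to 3-1-42. So patience sorting stacks the first
run as its first pile and never touches it again, and induction gives `RPW (R σ) = σ`.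
-/

def IsPileConfig : List (List ℕ) → Prop
  | [] => True
  | [] :: _ => False
  | (m :: t) :: P => (m :: t).Pairwise (· < ·) ∧ (∀ x ∈ P.flatten, m < x) ∧ IsPileConfig P

theorem flatten_PSinsert_perm (c : ℕ) (P : List (List ℕ)) :
    (PSinsert c P).flatten.Perm (c :: P.flatten) := by
  induction P with
  | nil => simp [PSinsert]
  | cons p P ih =>
    match p with
    | [] => simpa [PSinsert] using ih
    | m :: t =>
      unfold PSinsert
      split_ifs
      · rfl
      · simpa using (ih.append_left (m :: t)).trans List.perm_middle

theorem isPileConfig_PSinsert {c : ℕ} {P : List (List ℕ)} (hP : IsPileConfig P)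
    (hc : c ∉ P.flatten) : IsPileConfig (PSinsert c P) := by
  induction P with
  | nil => simp [PSinsert, IsPileConfig]
  | cons p P ih =>
    match p, hP with
    | m :: t, ⟨hsorted, hlt, hP⟩ =>
      simp only [List.flatten_cons, List.mem_append, not_or] at hc
      unfold PSinsert
      split_ifs with hcm
      · refine ⟨?_, fun x hx => hcm.trans (hlt x hx), hP⟩
        refine List.pairwise_cons.mpr ⟨fun y hy => ?_, hsorted⟩
        rcases List.mem_cons.mp hy with rfl | hy
        exacts [hcm, hcm.trans ((List.pairwise_cons.mp hsorted).1 y hy)]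
      · have hmc : m < c := lt_of_le_of_ne (not_lt.mp hcm) (fun h => hc.1 (h ▸ by simp))
        refine ⟨hsorted, fun x hx => ?_, ih hP hc.2⟩
        rcases List.mem_cons.mp ((flatten_PSinsert_perm c P).mem_iff.mp hx) with rfl | hx
        exacts [hmc, hlt x hx]

theorem isPileConfig_foldl_PSinsert (w : List ℕ) {P : List (List ℕ)} (hP : IsPileConfig P)
    (hnd : (P.flatten ++ w).Nodup) :
    IsPileConfig (w.foldl (fun ps c => PSinsert c ps) P) := by
  induction w generalizing P with
  | nil => exact hP
  | cons c w ih =>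
    have hc : c ∉ P.flatten := fun h => List.disjoint_of_nodup_append hnd h (by simp)
    refine ih (isPileConfig_PSinsert hP hc) ?_
    exact (((flatten_PSinsert_perm c P).append_right w).trans
      (List.perm_middle.symm)).nodup_iff.mpr hnd

theorem isPileConfig_PSpiles {w : List ℕ} (hw : w.Nodup) : IsPileConfig (PSpiles w) :=
  isPileConfig_foldl_PSinsert w trivial (by simpa using hw)

theorem foldl_PSinsert_of_lt {m : ℕ} (t : List ℕ) (P : List (List ℕ)) {w : List ℕ}
    (hw : ∀ c ∈ w, m < c) :
    w.foldl (fun ps c => PSinsert c ps) ((m :: t) :: P) =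
      (m :: t) :: w.foldl (fun ps c => PSinsert c ps) P := by
  induction w generalizing P with
  | nil => rfl
  | cons c w ih =>
    simp only [List.foldl_cons, PSinsert, if_neg (not_lt.mpr (hw c (by simp)).le)]
    exact ih _ fun c hc => hw c (by simp [hc])

theorem foldl_PSinsert_of_pairwise_gt {d : List ℕ} {x : ℕ} (p : List ℕ)
    (hd : (x :: d).Pairwise (· > ·)) :
    d.foldl (fun ps c => PSinsert c ps) [x :: p] = [d.reverse ++ x :: p] := by
  induction d generalizing x p with
  | nil => rfl
  | cons c d ih =>
    have hcx : c < x := List.rel_of_pairwise_cons hd (by simp)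
    simp only [List.foldl_cons, PSinsert, if_pos hcx]
    simpa using ih (x :: p) (List.pairwise_cons.mp hd).2

theorem PSpiles_of_pairwise_gt {d : List ℕ} {m : ℕ} (hd : (d ++ [m]).Pairwise (· > ·)) :
    PSpiles (d ++ [m]) = [m :: d.reverse] := by
  cases d with
  | nil => rfl
  | cons x d => exact (foldl_PSinsert_of_pairwise_gt [] hd).trans (by simp)

theorem PSpiles_append_cons {d w : List ℕ} {m : ℕ} (hd : (d ++ [m]).Pairwise (· > ·))
    (hw : ∀ x ∈ w, m < x) : PSpiles (d ++ m :: w) = (m :: d.reverse) :: PSpiles w := by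
  rw [← List.singleton_append, ← List.append_assoc, PSpiles, List.foldl_append, ← PSpiles,
    PSpiles_of_pairwise_gt hd, foldl_PSinsert_of_lt _ _ hw]
  rfl

theorem RPW_cons (p : List ℕ) (P : List (List ℕ)) : RPW (p :: P) = p.reverse ++ RPW P := by
  simp [RPW]

theorem mem_RPW {e : ℕ} {P : List (List ℕ)} : e ∈ RPW P ↔ e ∈ P.flatten := by
  induction P with
  | nil => rfl
  | cons p P ih => simp [RPW_cons, ih]

/-- Index-free form of `AvoidsBarred`: `x`, `y z` is the occurrence of 2-31, and a letter of `b`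
below `z` completes it to an occurrence of 3-1-42. -/
def AvoidsBarredWord (w : List ℕ) : Prop :=
  ∀ (a b c : List ℕ) (x y z : ℕ),
    w = a ++ x :: b ++ y :: z :: c → z < x → x < y → ∃ e ∈ b, e < z

theorem avoidsBarredWord_nil : AvoidsBarredWord [] := by
  intro a b c x y z h
  simp at h

theorem AvoidsBarredWord.of_append {u w : List ℕ} (h : AvoidsBarredWord (u ++ w)) :
    AvoidsBarredWord w :=
  fun a b c x y z hw => h (u ++ a) b c x y z (by simp [hw])

theorem eq_or_mem_of_append_singleton_eq {α : Type*} {d a l : List α} {m x : α}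
    (h : d ++ [m] = a ++ x :: l) : m = x ∨ m ∈ l := by
  rcases List.eq_nil_or_concat' l with rfl | ⟨l', y, rfl⟩
  · simpa using (List.append_inj' h rfl).2
  · rw [show a ++ x :: (l' ++ [y]) = (a ++ x :: l') ++ [y] by simp] at h
    simp [show m = y by simpa using (List.append_inj' h rfl).2]

theorem AvoidsBarredWord.append_cons {d R : List ℕ} {m : ℕ} (hd : (d ++ [m]).Pairwise (· > ·))
    (hR : AvoidsBarredWord R) (hlt : ∀ e ∈ R, m < e) : AvoidsBarredWord (d ++ m :: R) := by
  intro a b c x y z hw hzx hxy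
  rw [← List.singleton_append, ← List.append_assoc, List.append_assoc a, List.cons_append] at hw
  rcases List.append_eq_append_iff.mp hw with ⟨a', rfl, hR'⟩ | ⟨l, hrun, hrest⟩
  · exact hR a' b c x y z (by simp [hR']) hzx hxy
  rcases l with _ | ⟨x', l⟩
  · exact hR [] b c x y z (by simp [hrest]) hzx hxy
  simp only [List.cons_append, List.cons.injEq] at hrest
  obtain ⟨rfl, hrest⟩ := hrest
  obtain ⟨hlb, hzR⟩ : l ⊆ b ∧ z ∈ R := by
    rcases List.append_eq_append_iff.mp hrest with ⟨l', rfl, hl'⟩ | ⟨l', rfl, rfl⟩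
    · rcases l' with _ | ⟨y', l'⟩
      · subst hl'
        simp
      obtain ⟨rfl, -⟩ := List.cons_eq_cons.mp hl'
      rw [hrun] at hd
      have hyx := List.rel_of_pairwise_cons (List.pairwise_append.mp hd).2.1
        (show y ∈ b ++ y :: l' by simp)
      omega
    · simp
  have hmz := hlt z hzR
  rcases eq_or_mem_of_append_singleton_eq hrun with rfl | hml
  · omega
  · exact ⟨m, hlb hml, hmz⟩

theorem AvoidsBarredWord.lt_of_mem {a w : List ℕ} {m : ℕ} (hav : AvoidsBarredWord (a ++ m :: w))
    (hm : m ∉ w) (hhead : ∀ b ∈ w.head?, m ≤ b) {z : ℕ} (hz : z ∈ w) : m < z := by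
  by_contra! hzm
  have hzm : z < m := lt_of_le_of_ne hzm (by rintro rfl; exact hm hz)
  obtain ⟨z, hfind⟩ := Option.isSome_iff_exists.mp
    (List.find?_isSome (p := (· < m)) |>.mpr ⟨z, hz, by simpa using hzm⟩)
  obtain ⟨hzm, u, c, rfl, hu⟩ := List.find?_eq_some_iff_append.mp hfind
  simp only [decide_eq_true_eq, Bool.not_eq_true', decide_eq_false_iff_not, not_lt] at hzm hu
  rcases List.eq_nil_or_concat' u with rfl | ⟨b, y, rfl⟩
  · have := hhead z (by simp)
    omega
  have hmy : m < y := lt_of_le_of_ne (hu y (by simp)) (by rintro rfl; exact hm (by simp))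
  obtain ⟨e, he, hez⟩ := hav a b c m y z (by simp) hzm hmy
  have := hu e (by simp [he])
  omega

theorem exists_eq_append_cons_isChain_gt {α : Type*} [LinearOrder α] {w : List α}
    (hw : w ≠ []) :
    ∃ d m v, w = d ++ m :: v ∧ (d ++ [m]).IsChain (· > ·) ∧ ∀ b ∈ v.head?, m ≤ b := by
  induction w with
  | nil => contradiction
  | cons a l ih =>
    cases l with
    | nil => exact ⟨[], a, [], rfl, by simp, by simp⟩
    | cons b l =>
      by_cases hba : b < a
      · obtain ⟨d, m, v, hl, hchain, hhead⟩ := ih (List.cons_ne_nil b l)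
        refine ⟨a :: d, m, v, by simp [hl], ?_, hhead⟩
        have : (d ++ [m]).head? = some b := by
          cases d <;> simp_all
        simpa [List.isChain_cons, this, hba] using hchain
      · exact ⟨[], a, b :: l, rfl, by simp, by simpa using hba⟩

theorem avoidsBarredWord_RPW :
    ∀ {P : List (List ℕ)}, IsPileConfig P → AvoidsBarredWord (RPW P)
  | [], _ => avoidsBarredWord_nil
  | (m :: t) :: P, ⟨hsorted, hlt, hP⟩ => by
    rw [RPW_cons, List.reverse_cons, List.append_assoc, List.singleton_append]
    refine AvoidsBarredWord.append_cons ?_ (avoidsBarredWord_RPW hP) fun e he => hlt e ?_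
    · simpa [← List.reverse_cons, List.pairwise_reverse] using hsorted
    · exact mem_RPW.mp he

theorem RPW_PSpiles_of_avoidsBarredWord {w : List ℕ} (hnd : w.Nodup) (hav : AvoidsBarredWord w) :
    RPW (PSpiles w) = w := by
  rcases eq_or_ne w [] with rfl | hw
  · rfl
  obtain ⟨d, m, v, rfl, hchain, hhead⟩ := exists_eq_append_cons_isChain_gt hw
  have hnd_mv : (m :: v).Nodup := (List.nodup_append.mp hnd).2.1
  have hv : ∀ x ∈ v, m < x := fun x hx => hav.lt_of_mem (List.nodup_cons.mp hnd_mv).1 hhead hx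
  have hav_v : AvoidsBarredWord v := AvoidsBarredWord.of_append (u := d ++ [m]) (by simpa using hav)
  rw [PSpiles_append_cons (List.isChain_iff_pairwise.mp hchain) hv, RPW_cons,
    RPW_PSpiles_of_avoidsBarredWord hnd_mv.of_cons hav_v]
  simp
termination_by w.length
decreasing_by subst_vars; simp; omega

theorem exists_eq_append_cons_append_cons_cons {α : Type*} {w : List α} {i j : ℕ} (hij : i < j)
    (hj : j + 1 < w.length) : ∃ a b c x y z, w = a ++ x :: b ++ y :: z :: c ∧
      a.length = i ∧ a.length + b.length + 1 = j := by
  refine ⟨w.take i, (w.take j).drop (i + 1), w.drop (j + 2), w[i], w[j], w[j + 1], ?_,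
    by simp; omega, by simp; omega⟩
  calc w = (w.take j).take i ++ (w.take j).drop i ++ w.drop j := by
        rw [List.take_append_drop, List.take_append_drop]
    _ = _ := by
        rw [List.take_take, min_eq_left hij.le,
          List.drop_eq_getElem_cons (l := w.take j) (i := i) (by simp; omega), List.getElem_take,
          List.drop_eq_getElem_cons (l := w) (i := j) (by omega),
          List.drop_eq_getElem_cons hj]

theorem avoidsBarredWord_iff_getD (w : List ℕ) : AvoidsBarredWord w ↔
    ∀ i j : ℕ, i < j → j + 1 < w.length → w.getD (j + 1) 0 < w.getD i 0 →
      w.getD i 0 < w.getD j 0 → ∃ k, i < k ∧ k < j ∧ w.getD k 0 < w.getD (j + 1) 0 := by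
  constructor
  · intro hav i j hij hj h1 h2
    obtain ⟨a, b, c, x, y, z, rfl, rfl, rfl⟩ := exists_eq_append_cons_append_cons_cons hij hj
    simp [List.getD_eq_getElem?_getD, add_assoc] at h1 h2
    obtain ⟨e, he, hez⟩ := hav a b c x y z rfl h1 h2
    obtain ⟨t, ht, rfl⟩ := List.getElem_of_mem he
    refine ⟨a.length + t + 1, by omega, by omega, ?_⟩
    simpa [List.getD_eq_getElem?_getD, List.getElem?_append, add_assoc, ht] using hez
  · intro h a b c x y z hw hzx hxy
    subst hw
    obtain ⟨k, hik, hkj, hk⟩ := h a.length (a.length + b.length + 1) (by omega) (by simp; omega)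
      (by simpa [List.getD_eq_getElem?_getD, add_assoc] using hzx)
      (by simpa [List.getD_eq_getElem?_getD, add_assoc] using hxy)
    obtain ⟨t, rfl⟩ : ∃ t, k = a.length + t + 1 := ⟨k - a.length - 1, by omega⟩
    have ht : t < b.length := by omega
    refine ⟨b[t], List.getElem_mem ht, ?_⟩
    simpa [List.getD_eq_getElem?_getD, List.getElem?_append, add_assoc, ht] using hk

theorem avoidsBarred_iff {n : ℕ} (σ : Equiv.Perm (Fin n)) :
    AvoidsBarred σ ↔ AvoidsBarredWord (permWord σ) := by
  rw [avoidsBarredWord_iff_getD, AvoidsBarred, permWord, List.length_ofFn]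

theorem avoidsBarred_of_eq_RPW {n : ℕ} {σ τ : Equiv.Perm (Fin n)}
    (h : permWord σ = RPW (PSpiles (permWord τ))) : AvoidsBarred σ := by
  rw [avoidsBarred_iff, h]
  exact avoidsBarredWord_RPW (isPileConfig_PSpiles (permWord_nodup τ))

/-- The set `S_n(3-1̄-42)` of permutations avoiding the barred pattern
3-1̄-42 is exactly the set of reverse patience words of pile configurations of
permutations; equivalently, `σ` avoids 3-1̄-42 if and only if `σ = RPW(R(σ))`. -/
theorem stmt14 (n : ℕ) (σ : Equiv.Perm (Fin n)) :
    (AvoidsBarred σ ↔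
      ∃ τ : Equiv.Perm (Fin n), permWord σ = RPW (PSpiles (permWord τ))) ∧
    (AvoidsBarred σ ↔ permWord σ = RPW (PSpiles (permWord σ))) := by
  have h_fixed : AvoidsBarred σ → permWord σ = RPW (PSpiles (permWord σ)) := fun h =>
    (RPW_PSpiles_of_avoidsBarredWord (permWord_nodup σ) ((avoidsBarred_iff σ).mp h)).symm
  exact ⟨⟨fun h => ⟨σ, h_fixed h⟩, fun ⟨_, hτ⟩ => avoidsBarred_of_eq_RPW hτ⟩,
    ⟨h_fixed, avoidsBarred_of_eq_RPW⟩⟩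
end
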